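/- arXiv:math/9809176 — 5 statements merged into one kernel-verified Lean document; each statement's English description precedes it below -/
import Mathlib

section
/- For every dimension d ≥ 1 and every nonempty finite set P of d-dimensional bricks, the set M(P) of ⪯-minimal bricks among the bricks tilable by P is finite. -/
open scoped Classical

noncomputable section

/-- The (integer-valued) indicator function of the half-open box
`∏ i, [w i, w i + b i)` in `ℝ^d`, i.e. of the translate by `w` of the brick `b`. -/
def brickInd {d : ℕ} (b : Fin d → ℕ) (w : Fin d → ℝ) (y : Fin d → ℝ) : ℤ :=
  if ∀ i, w i ≤ y i ∧ y i < w i + (b i : ℝ) then 1 else 0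

/-- `t` is tilable by the protoset `P`: the indicator function of `t` is an
integer-linear combination of indicator functions of translates of members of `P`. -/
def Tilable {d : ℕ} (P : Set (Fin d → ℕ)) (t : Fin d → ℕ) : Prop :=
  ∃ (m : ℕ) (p : Fin m → (Fin d → ℕ)) (w : Fin m → (Fin d → ℝ)) (γ : Fin m → ℤ),
    (∀ j, p j ∈ P) ∧
      ∀ y : Fin d → ℝ, brickInd t (fun _ => 0) y = ∑ j, γ j * brickInd (p j) (w j) y

/-- `t` is packable by the protoset `P`: as for tilability but with all coefficients 1. -/
def Packable {d : ℕ} (P : Set (Fin d → ℕ)) (t : Fin d → ℕ) : Prop :=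
  ∃ (m : ℕ) (p : Fin m → (Fin d → ℕ)) (w : Fin m → (Fin d → ℝ)),
    (∀ j, p j ∈ P) ∧
      ∀ y : Fin d → ℝ, brickInd t (fun _ => 0) y = ∑ j, brickInd (p j) (w j) y

/-- The divisibility partial order on bricks: `b ⪯ t` iff each sidelength of `b`
divides the corresponding sidelength of `t`. -/
def BrickLE {d : ℕ} (b t : Fin d → ℕ) : Prop := ∀ i, b i ∣ t i

/-- The set of `⪯`-minimal elements of a set of bricks. -/
def MinOf {d : ℕ} (S : Set (Fin d → ℕ)) : Set (Fin d → ℕ) :=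
  {t ∈ S | ∀ s ∈ S, BrickLE s t → s = t}

/-- `M(P)`: the set of `⪯`-minimal bricks among the bricks tilable by `P`. -/
def MSet {d : ℕ} (P : Set (Fin d → ℕ)) : Set (Fin d → ℕ) :=
  MinOf {t | (∀ i, 0 < t i) ∧ Tilable P t}

/-- `rank(P) = card M(P)`. -/
def brickRank {d : ℕ} (P : Set (Fin d → ℕ)) : ℕ := (MSet P).ncard

/-- `comb_δ(A)`: gcd of the `δ`-th sidelengths, lcm of the others. -/
def combN {d : ℕ} (δ : Fin d) (A : Finset (Fin d → ℕ)) : Fin d → ℕ :=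
  fun j => if j = δ then A.gcd (fun b => b δ) else A.lcm (fun b => b j)

/-- `Ext_δ(Q) = { comb_δ(A) : A a nonempty (finite) subset of Q }`. -/
def ExtN {d : ℕ} (δ : Fin d) (Q : Set (Fin d → ℕ)) : Set (Fin d → ℕ) :=
  {b | ∃ A : Finset (Fin d → ℕ), A.Nonempty ∧ ↑A ⊆ Q ∧ b = combN δ A}

/-- `Ext_{1..d}(Q) = Ext_d (Ext_{d-1} (⋯ (Ext_1 Q) ⋯))`. -/
def ExtAllN {d : ℕ} (Q : Set (Fin d → ℕ)) : Set (Fin d → ℕ) :=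
  (List.finRange d).foldl (fun S δ => ExtN δ S) Q

/-!
The positive bricks tilable by `P` form an upper set for `⪯` which, along every axis-parallel
line, is closed under subtracting a shorter member from a longer one: the longer box is the
shorter one plus a translate of the difference. So along a line the sides occurring are the
positive multiples of the least one. Every such set has finitely many minimal elements, by
induction on the number of free directions: collapsing direction `δ` to side `1` gives a set of
the same kind with one free direction fewer, whose minimal elements `τ` are finitely many, and
the `δ`-side of a minimal brick `s` divides the least `δ`-side over any minimal `τ` below the
collapse of `s`, so it takes finitely many values.
-/

open Function

variable {d : ℕ}

def tilingGroup (P : Set (Fin d → ℕ)) : AddSubgroup ((Fin d → ℝ) → ℤ) where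
  carrier := {f | ∃ (m : ℕ) (p : Fin m → (Fin d → ℕ)) (w : Fin m → (Fin d → ℝ)) (γ : Fin m → ℤ),
    (∀ j, p j ∈ P) ∧ ∀ y, f y = ∑ j, γ j * brickInd (p j) (w j) y}
  zero_mem' := ⟨0, Fin.elim0, Fin.elim0, Fin.elim0, Fin.rec0, by simp⟩
  add_mem' := by
    rintro f g ⟨m, p, w, γ, hp, hf⟩ ⟨n, q, v, η, hq, hg⟩
    refine ⟨m + n, Fin.append p q, Fin.append w v, Fin.append γ η,
      Fin.addCases (by simpa using hp) (by simpa using hq), fun y => ?_⟩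
    simp [Fin.sum_univ_add, hf, hg]
  neg_mem' := by
    rintro f ⟨m, p, w, γ, hp, hf⟩
    exact ⟨m, p, w, -γ, hp, fun y => by simp [hf]⟩

theorem tilable_iff_mem_tilingGroup {P : Set (Fin d → ℕ)} {t : Fin d → ℕ} :
    Tilable P t ↔ brickInd t 0 ∈ tilingGroup P := Iff.rfl

theorem brickInd_add (b : Fin d → ℕ) (w u y : Fin d → ℝ) :
    brickInd b (w + u) y = brickInd b w (y - u) := by
  simp only [brickInd, Pi.add_apply, Pi.sub_apply, le_sub_iff_add_le, sub_lt_iff_lt_add]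
  grind

theorem comp_sub_mem_tilingGroup {P : Set (Fin d → ℕ)} {f : (Fin d → ℝ) → ℤ}
    (hf : f ∈ tilingGroup P) (u : Fin d → ℝ) : (fun y => f (y - u)) ∈ tilingGroup P := by
  obtain ⟨m, p, w, γ, hp, hf⟩ := hf
  exact ⟨m, p, fun j => w j + u, γ, hp, fun y => by simp [hf, brickInd_add]⟩

theorem brickInd_eq_prod (b : Fin d → ℕ) (w y : Fin d → ℝ) :
    brickInd b w y = ∏ i, if w i ≤ y i ∧ y i < w i + b i then (1 : ℤ) else 0 := by
  simp [brickInd, Finset.prod_boole]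

theorem brickInd_update_single (t : Fin d → ℕ) (δ : Fin d) (c : ℕ) (x : ℝ) (y : Fin d → ℝ) :
    brickInd (update t δ c) (Pi.single δ x) y
      = (if x ≤ y δ ∧ y δ < x + c then 1 else 0) *
        ∏ i ∈ {δ}ᶜ, if 0 ≤ y i ∧ y i < t i then (1 : ℤ) else 0 := by
  rw [brickInd_eq_prod, Fintype.prod_eq_mul_prod_compl δ]
  simp only [Pi.single_eq_same, update_self]
  congr 1
  refine Finset.prod_congr rfl fun i hi => ?_
  have hi : i ≠ δ := by simpa using hi
  simp [hi]

theorem brickInd_update_add (t : Fin d → ℕ) (δ : Fin d) (a b : ℕ) (y : Fin d → ℝ) :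
    brickInd (update t δ (a + b)) 0 y
      = brickInd (update t δ a) 0 y + brickInd (update t δ b) (Pi.single δ (a : ℝ)) y := by
  rw [← Pi.single_zero δ]
  simp only [brickInd_update_single, ← add_mul]
  congr 1
  push_cast
  grind

theorem brickInd_eq_zero {b : Fin d → ℕ} {i : Fin d} (hi : b i = 0) (w : Fin d → ℝ) :
    brickInd b w = 0 := by
  ext y
  have : ¬ (w i ≤ y i ∧ y i < w i + b i) := by simp [hi]
  simp only [brickInd, Pi.zero_apply, ite_eq_right_iff]
  exact fun h => absurd (h i) this

namespace Tilable

variable {P : Set (Fin d → ℕ)} {t : Fin d → ℕ} {δ : Fin d} {a b : ℕ}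

theorem translate_mem_tilingGroup (h : Tilable P t) (u : Fin d → ℝ) :
    brickInd t u ∈ tilingGroup P := by
  convert comp_sub_mem_tilingGroup h u using 1
  ext y
  rw [← brickInd_add]
  exact congrArg (brickInd t · y) (zero_add u).symm

theorem update_add (ha : Tilable P (update t δ a)) (hb : Tilable P (update t δ b)) :
    Tilable P (update t δ (a + b)) := by
  rw [tilable_iff_mem_tilingGroup, funext (brickInd_update_add t δ a b)]
  exact add_mem ha (hb.translate_mem_tilingGroup _)

theorem update_of_add (hab : Tilable P (update t δ (a + b))) (hb : Tilable P (update t δ b)) :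
    Tilable P (update t δ a) := by
  rw [tilable_iff_mem_tilingGroup, funext (brickInd_update_add t δ a b)] at hab
  rw [tilable_iff_mem_tilingGroup]
  convert sub_mem hab (hb.translate_mem_tilingGroup (Pi.single δ (a : ℝ))) using 1
  ext y
  simp

theorem update_of_dvd (ha : Tilable P (update t δ a)) (hab : a ∣ b) :
    Tilable P (update t δ b) := by
  obtain ⟨k, rfl⟩ := hab
  induction k with
  | zero =>
    rw [tilable_iff_mem_tilingGroup, brickInd_eq_zero (i := δ) (by simp)]
    exact zero_mem _
  | succ k ih => exact ih.update_add ha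

theorem of_brickLE {s : Fin d → ℕ} (hs : Tilable P s) (hst : BrickLE s t) : Tilable P t := by
  suffices ∀ A : Finset (Fin d), Tilable P (A.piecewise t s) by simpa using this Finset.univ
  intro A
  induction A using Finset.induction_on with
  | empty => simpa using hs
  | insert δ A hδA ih =>
    rw [← update_eq_self δ (A.piecewise t s), Finset.piecewise_eq_of_notMem _ _ _ hδA] at ih
    rw [Finset.piecewise_insert]
    exact ih.update_of_dvd (hst δ)

end Tilable

theorem Nat.sInf_dvd_of_sub_mem {W : Set ℕ} (hpos : ∀ a ∈ W, 0 < a)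
    (hsub : ∀ a ∈ W, ∀ b ∈ W, b < a → a - b ∈ W) {a : ℕ} (ha : a ∈ W) : sInf W ∣ a := by
  induction a using Nat.strong_induction_on with
  | _ a ih =>
    have hm : sInf W ∈ W := Nat.sInf_mem ⟨a, ha⟩
    obtain h | h := (Nat.sInf_le ha).eq_or_lt
    · exact h ▸ dvd_rfl
    · have := ih (a - sInf W) (Nat.sub_lt (hpos a ha) (hpos _ hm)) (hsub a ha _ hm h)
      simpa [Nat.sub_add_cancel h.le] using this.add (dvd_refl (sInf W))

theorem BrickLE.trans {r s t : Fin d → ℕ} (hrs : BrickLE r s) (hst : BrickLE s t) :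
    BrickLE r t :=
  fun i => (hrs i).trans (hst i)

theorem BrickLE.prod_lt {s t : Fin d → ℕ} (hst : BrickLE s t) (ht : ∀ i, 0 < t i) (hne : s ≠ t) :
    ∏ i, s i < ∏ i, t i := by
  obtain ⟨i, hi⟩ := Function.ne_iff.1 hne
  have hle : ∀ i, s i ≤ t i := fun i => Nat.le_of_dvd (ht i) (hst i)
  exact Finset.prod_lt_prod (fun i _ => Nat.pos_of_dvd_of_pos (hst i) (ht i)) (fun i _ => hle i)
    ⟨i, Finset.mem_univ i, (hle i).lt_of_ne hi⟩

theorem exists_mem_minOf_brickLE {T : Set (Fin d → ℕ)} (hT : ∀ s ∈ T, ∀ i, 0 < s i)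
    {v : Fin d → ℕ} (hv : v ∈ T) : ∃ τ ∈ MinOf T, BrickLE τ v := by
  obtain ⟨τ, ⟨hτ, hτv⟩, hmin⟩ := (measure fun s : Fin d → ℕ => ∏ i, s i).wf.has_min
    {τ | τ ∈ T ∧ BrickLE τ v} ⟨v, hv, fun i => dvd_rfl⟩
  refine ⟨τ, ⟨hτ, fun s hs hsτ => ?_⟩, hτv⟩
  by_contra hne
  exact hmin s ⟨hs, hsτ.trans hτv⟩ (hsτ.prod_lt (hT τ hτ) hne)

theorem update_sInf_mem_of_mem_image {S : Set (Fin d → ℕ)} {δ : Fin d} {τ : Fin d → ℕ}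
    (hτ : τ ∈ (update · δ 1) '' S) : update τ δ (sInf {c | update τ δ c ∈ S}) ∈ S := by
  obtain ⟨s, hs, rfl⟩ := hτ
  exact Nat.sInf_mem (s := {c | update (update s δ 1) δ c ∈ S}) ⟨s δ, by simpa using hs⟩

structure IsSubtractiveUpperSet (K : Finset (Fin d)) (S : Set (Fin d → ℕ)) : Prop where
  pos : ∀ s ∈ S, ∀ i, 0 < s i
  eq_one : ∀ s ∈ S, ∀ j ∉ K, s j = 1
  mem_of_brickLE : ∀ s ∈ S, ∀ t, BrickLE s t → (∀ i, 0 < t i) → (∀ j ∉ K, t j = 1) → t ∈ S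
  update_sub_mem : ∀ δ ∈ K, ∀ v a b, b < a → update v δ a ∈ S → update v δ b ∈ S →
    update v δ (a - b) ∈ S

namespace IsSubtractiveUpperSet

variable {K : Finset (Fin d)} {S : Set (Fin d → ℕ)} {δ : Fin d}

theorem update_mem (hS : IsSubtractiveUpperSet K S) (hδ : δ ∈ K) {τ v : Fin d → ℕ} {c c' : ℕ}
    (h : update τ δ c ∈ S) (hτv : BrickLE τ v) (hv : ∀ i ≠ δ, 0 < v i)
    (hv₁ : ∀ j ∉ K, v j = 1) (hc : c ∣ c') (hc' : 0 < c') : update v δ c' ∈ S := by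
  refine hS.mem_of_brickLE _ h _ ?_ ?_ ?_
  · exact (forall_update_iff _ fun i x => update τ δ c i ∣ x).2
      ⟨by simpa using hc, fun i hi => by simpa [hi] using hτv i⟩
  · exact (forall_update_iff _ fun _ x => 0 < x).2 ⟨hc', hv⟩
  · intro j hj
    rw [update_of_ne (by rintro rfl; exact hj hδ)]
    exact hv₁ j hj

theorem update_mem_of_dvd (hS : IsSubtractiveUpperSet K S) (hδ : δ ∈ K) {s : Fin d → ℕ} {c : ℕ}
    (hs : s ∈ S) (hc : s δ ∣ c) (hc₀ : 0 < c) : update s δ c ∈ S :=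
  hS.update_mem hδ (by rwa [update_eq_self]) (fun _ => dvd_rfl) (fun i _ => hS.pos s hs i)
    (hS.eq_one s hs) hc hc₀

theorem sInf_dvd (hS : IsSubtractiveUpperSet K S) (hδ : δ ∈ K) {v : Fin d → ℕ} {a : ℕ}
    (h : update v δ a ∈ S) : sInf {c | update v δ c ∈ S} ∣ a :=
  Nat.sInf_dvd_of_sub_mem (fun c hc => by simpa using hS.pos _ hc δ)
    (fun _ ha _ hb hba => hS.update_sub_mem δ hδ v _ _ hba ha hb) h

theorem image_update_one (hS : IsSubtractiveUpperSet K S) (hδ : δ ∈ K) :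
    IsSubtractiveUpperSet (K.erase δ) ((update · δ 1) '' S) where
  pos := by
    rintro _ ⟨s, hs, rfl⟩
    exact (forall_update_iff s fun _ x => 0 < x).2 ⟨one_pos, fun i _ => hS.pos s hs i⟩
  eq_one := by
    rintro _ ⟨s, hs, rfl⟩ j hj
    rcases eq_or_ne j δ with rfl | hjδ
    · simp
    · simpa [hjδ] using hS.eq_one s hs j fun h => hj (Finset.mem_erase.2 ⟨hjδ, h⟩)
  mem_of_brickLE := by
    rintro _ ⟨s, hs, rfl⟩ t hst ht ht₁
    refine ⟨update t δ (s δ), ?_, ?_⟩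
    · exact hS.update_mem hδ (by simpa using hs) hst (fun i _ => ht i)
        (fun j hj => ht₁ j fun h => hj (Finset.mem_of_mem_erase h)) dvd_rfl (hS.pos s hs δ)
    · change update (update t δ (s δ)) δ 1 = t
      rw [update_idem, ← ht₁ δ (Finset.notMem_erase δ K), update_eq_self]
  update_sub_mem := by
    rintro δ' hδ' v a b hba ⟨s₁, hs₁, h₁⟩ ⟨s₂, hs₂, h₂⟩
    have hδδ' : δ ≠ δ' := (Finset.ne_of_mem_erase hδ').symm
    have hv : v δ = 1 := by simpa [hδδ'] using (congrFun h₁ δ).symm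
    -- lift both preimages to the common `δ`-side `l`, where they lie on one `δ'`-line of `S`
    set l := Nat.lcm (s₁ δ) (s₂ δ)
    have lift : ∀ s ∈ S, ∀ x, update s δ 1 = update v δ' x → s δ ∣ l →
        update (update v δ l) δ' x ∈ S := by
      intro s hs x hx hdvd
      rw [update_comm hδδ', ← hx, update_idem]
      exact hS.update_mem_of_dvd hδ hs hdvd (Nat.lcm_pos (hS.pos s₁ hs₁ δ) (hS.pos s₂ hs₂ δ))
    refine ⟨_, hS.update_sub_mem δ' (Finset.mem_of_mem_erase hδ') _ a b hba
      (lift s₁ hs₁ a h₁ (Nat.dvd_lcm_left _ _)) (lift s₂ hs₂ b h₂ (Nat.dvd_lcm_right _ _)), ?_⟩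
    change update (update (update v δ l) δ' (a - b)) δ 1 = _
    rw [update_comm hδδ', update_idem, ← update_comm hδδ', ← hv, update_eq_self]

theorem apply_eq_sInf (hS : IsSubtractiveUpperSet K S) (hδ : δ ∈ K) {s : Fin d → ℕ}
    (hs : s ∈ MinOf S) : s δ = sInf {c | update s δ c ∈ S} := by
  have hsδ : s δ ∈ {c | update s δ c ∈ S} := by simpa using hs.1
  have hdvd := hS.sInf_dvd hδ hsδ
  have hle : BrickLE (update s δ (sInf {c | update s δ c ∈ S})) s :=
    (forall_update_iff _ fun i x => x ∣ s i).2 ⟨hdvd, fun _ _ => dvd_rfl⟩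
  simpa using (congrFun (hs.2 _ (Nat.sInf_mem ⟨_, hsδ⟩) hle) δ).symm

theorem apply_dvd_sInf (hS : IsSubtractiveUpperSet K S) (hδ : δ ∈ K) {s τ : Fin d → ℕ}
    (hs : s ∈ MinOf S) (hτ : τ ∈ (update · δ 1) '' S) (hτs : BrickLE τ (update s δ 1)) :
    s δ ∣ sInf {c | update τ δ c ∈ S} := by
  have hg := update_sInf_mem_of_mem_image hτ
  have := hS.update_mem hδ hg hτs (fun i hi => by simpa [hi] using hS.pos s hs.1 i)
    (fun j hj => by simpa [show j ≠ δ by rintro rfl; exact hj hδ] using hS.eq_one s hs.1 j hj)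
    dvd_rfl (by simpa using hS.pos _ hg δ)
  rw [update_idem] at this
  exact hS.apply_eq_sInf hδ hs ▸ hS.sInf_dvd hδ this

theorem finite_image_apply_minOf (hS : IsSubtractiveUpperSet K S) (hδ : δ ∈ K)
    (hT : (MinOf ((update · δ 1) '' S)).Finite) : ((· δ) '' MinOf S).Finite := by
  refine (hT.biUnion fun τ _ => (Nat.divisors (sInf {c | update τ δ c ∈ S})).finite_toSet).subset ?_
  rintro _ ⟨s, hs, rfl⟩
  obtain ⟨τ, hτ, hτs⟩ := exists_mem_minOf_brickLE (hS.image_update_one hδ).pos ⟨s, hs.1, rfl⟩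
  have hg := update_sInf_mem_of_mem_image hτ.1
  exact Set.mem_biUnion hτ <| Nat.mem_divisors.2
    ⟨hS.apply_dvd_sInf hδ hs hτ.1 hτs, by simpa using (hS.pos _ hg δ).ne'⟩

theorem finite_minOf (hS : IsSubtractiveUpperSet K S) : (MinOf S).Finite := by
  induction K using Finset.strongInduction generalizing S with
  | H K ih =>
  refine (Set.Finite.pi fun δ => ?_ : (Set.univ.pi fun δ => (· δ) '' MinOf S).Finite).subset
    fun s hs δ _ => ⟨s, hs, rfl⟩
  by_cases hδ : δ ∈ K
  · exact hS.finite_image_apply_minOf hδ (ih _ (Finset.erase_ssubset hδ) (hS.image_update_one hδ))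
  · refine (Set.finite_singleton 1).subset ?_
    rintro _ ⟨s, hs, rfl⟩
    exact hS.eq_one s hs.1 δ hδ

end IsSubtractiveUpperSet

theorem isSubtractiveUpperSet_tilable (P : Set (Fin d → ℕ)) :
    IsSubtractiveUpperSet Finset.univ {t | (∀ i, 0 < t i) ∧ Tilable P t} where
  pos _ hs := hs.1
  eq_one _ _ j hj := absurd (Finset.mem_univ j) hj
  mem_of_brickLE _ hs _ hst ht _ := ⟨ht, hs.2.of_brickLE hst⟩
  update_sub_mem δ _ v a b hba ha hb := by
    refine ⟨(forall_update_iff _ fun _ x => 0 < x).2 ⟨Nat.sub_pos_of_lt hba, ?_⟩, ?_⟩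
    · exact fun i hi => by simpa [hi] using ha.1 i
    · exact Tilable.update_of_add (by rw [Nat.sub_add_cancel hba.le]; exact ha.2) hb.2

theorem finite_MSet (P : Set (Fin d → ℕ)) : (MSet P).Finite :=
  (isSubtractiveUpperSet_tilable P).finite_minOf

theorem statement0_general {d : ℕ} (P : Finset (Fin d → ℕ)) :
    (MSet (↑P : Set (Fin d → ℕ))).Finite :=
  finite_MSet _

/-- For every dimension `d ≥ 1` and every nonempty finite set `P` of
`d`-dimensional bricks, the set `M(P)` of `⪯`-minimal bricks among the bricks tilable
by `P` is finite. -/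
theorem statement0 {d : ℕ} (hd : 1 ≤ d) (P : Finset (Fin d → ℕ))
    (hne : P.Nonempty) (hpos : ∀ b ∈ P, ∀ i, 0 < b i) :
    (MSet (↑P : Set (Fin d → ℕ))).Finite :=
  statement0_general P
end
end

section
/- For every dimension d ≥ 1 and every nonempty finite set P of d-dimensional bricks, there exists an integer N such that every brick t all of whose sidelengths exceed N and which is tilable by P is in fact packable by P. -/
open scoped Classical

noncomputable section

open MeasureTheory Complex

/-- packable with the box translated to `v`. -/
def PackAt {d : ℕ} (P : Set (Fin d → ℕ)) (v : Fin d → ℝ) (u : Fin d → ℕ) : Prop :=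
  ∃ (m : ℕ) (p : Fin m → (Fin d → ℕ)) (w : Fin m → (Fin d → ℝ)),
    (∀ j, p j ∈ P) ∧ ∀ y, brickInd u v y = ∑ j, brickInd (p j) (w j) y

lemma packAt_self {d : ℕ} {P : Set (Fin d → ℕ)} {q : Fin d → ℕ} (hq : q ∈ P)
    (v : Fin d → ℝ) : PackAt P v q := by
  refine ⟨1, fun _ => q, fun _ => v, fun _ => hq, fun y => ?_⟩
  simp

lemma brickInd_side_zero {d : ℕ} {u : Fin d → ℕ} {δ : Fin d} (h : u δ = 0)
    (v y : Fin d → ℝ) : brickInd u v y = 0 := by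
  unfold brickInd
  rw [if_neg]
  intro hc
  have := hc δ
  rw [h] at this
  push_cast at this
  linarith [this.1, this.2]

lemma packAt_side_zero {d : ℕ} (P : Set (Fin d → ℕ)) {u : Fin d → ℕ} {δ : Fin d}
    (h : u δ = 0) (v : Fin d → ℝ) : PackAt P v u := by
  refine ⟨0, fun j => j.elim0, fun j => j.elim0, fun j => j.elim0, fun y => ?_⟩
  simp [brickInd_side_zero h]

lemma brickInd_split {d : ℕ} (u : Fin d → ℕ) (v : Fin d → ℝ) (δ : Fin d) (a c : ℕ)
    (y : Fin d → ℝ) :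
    brickInd (Function.update u δ (a + c)) v y =
      brickInd (Function.update u δ a) v y +
        brickInd (Function.update u δ c) (Function.update v δ (v δ + (a : ℝ))) y := by
  unfold brickInd
  have h1 : (∀ i, v i ≤ y i ∧ y i < v i + ((Function.update u δ (a + c)) i : ℝ)) ↔
      ((v δ ≤ y δ ∧ y δ < v δ + ((a : ℝ) + c)) ∧
        ∀ i, i ≠ δ → (v i ≤ y i ∧ y i < v i + (u i : ℝ))) := by
    constructor
    · intro h
      refine ⟨?_, fun i hi => ?_⟩
      · have := h δ; simp only [Function.update_self] at this; push_cast at this; exact this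
      · have := h i; rwa [Function.update_of_ne hi] at this
    · intro ⟨h1, h2⟩ i
      rcases eq_or_ne i δ with rfl | hi
      · simp only [Function.update_self]; push_cast; exact h1
      · rw [Function.update_of_ne hi]; exact h2 i hi
  have h2 : (∀ i, v i ≤ y i ∧ y i < v i + ((Function.update u δ a) i : ℝ)) ↔
      ((v δ ≤ y δ ∧ y δ < v δ + (a : ℝ)) ∧
        ∀ i, i ≠ δ → (v i ≤ y i ∧ y i < v i + (u i : ℝ))) := by
    constructor
    · intro h
      refine ⟨?_, fun i hi => ?_⟩
      · have := h δ; simpa using this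
      · have := h i; rwa [Function.update_of_ne hi] at this
    · intro ⟨h1, h2⟩ i
      rcases eq_or_ne i δ with rfl | hi
      · simpa using h1
      · rw [Function.update_of_ne hi]; exact h2 i hi
  have h3 : (∀ i, (Function.update v δ (v δ + (a:ℝ))) i ≤ y i ∧
      y i < (Function.update v δ (v δ + (a:ℝ))) i + ((Function.update u δ c) i : ℝ)) ↔
      ((v δ + (a:ℝ) ≤ y δ ∧ y δ < v δ + (a:ℝ) + c) ∧
        ∀ i, i ≠ δ → (v i ≤ y i ∧ y i < v i + (u i : ℝ))) := by
    constructor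
    · intro h
      refine ⟨?_, fun i hi => ?_⟩
      · have := h δ; simpa using this
      · have := h i; rwa [Function.update_of_ne hi, Function.update_of_ne hi] at this
    · intro ⟨h1, h2⟩ i
      rcases eq_or_ne i δ with rfl | hi
      · simpa using h1
      · rw [Function.update_of_ne hi, Function.update_of_ne hi]; exact h2 i hi
  rw [if_congr h1 rfl rfl, if_congr h2 rfl rfl, if_congr h3 rfl rfl]
  by_cases K : ∀ i, i ≠ δ → (v i ≤ y i ∧ y i < v i + (u i : ℝ))
  · have ha : (0:ℝ) ≤ (a:ℝ) := Nat.cast_nonneg a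
    have hc : (0:ℝ) ≤ (c:ℝ) := Nat.cast_nonneg c
    rcases lt_or_ge (y δ) (v δ + (a:ℝ)) with h | h
    · rcases le_or_gt (v δ) (y δ) with h' | h'
      · rw [if_pos ⟨⟨h', by linarith⟩, K⟩, if_pos ⟨⟨h', h⟩, K⟩,
          if_neg (by rintro ⟨⟨h1, _⟩, _⟩; linarith)]
        norm_num
      · rw [if_neg (by rintro ⟨⟨h1, _⟩, _⟩; linarith),
          if_neg (by rintro ⟨⟨h1, _⟩, _⟩; linarith),
          if_neg (by rintro ⟨⟨h1, _⟩, _⟩; linarith)]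
        norm_num
    · rcases lt_or_ge (y δ) (v δ + (a:ℝ) + c) with h' | h'
      · rw [if_pos ⟨⟨by linarith, by linarith⟩, K⟩,
          if_neg (by rintro ⟨⟨_, h2⟩, _⟩; linarith), if_pos ⟨⟨h, h'⟩, K⟩]
        norm_num
      · rw [if_neg (by rintro ⟨⟨_, h2⟩, _⟩; linarith),
          if_neg (by rintro ⟨⟨_, h2⟩, _⟩; linarith),
          if_neg (by rintro ⟨⟨_, h2⟩, _⟩; linarith)]
        norm_num
  · rw [if_neg (by rintro ⟨_, h2⟩; exact K h2), if_neg (by rintro ⟨_, h2⟩; exact K h2),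
      if_neg (by rintro ⟨_, h2⟩; exact K h2)]
    norm_num

lemma packAt_add {d : ℕ} {P : Set (Fin d → ℕ)} {u u1 u2 : Fin d → ℕ}
    {v v1 v2 : Fin d → ℝ}
    (h : ∀ y, brickInd u v y = brickInd u1 v1 y + brickInd u2 v2 y)
    (h1 : PackAt P v1 u1) (h2 : PackAt P v2 u2) : PackAt P v u := by
  obtain ⟨m1, p1, w1, hp1, he1⟩ := h1
  obtain ⟨m2, p2, w2, hp2, he2⟩ := h2
  refine ⟨m1 + m2, Fin.append p1 p2, Fin.append w1 w2, fun j => ?_, fun y => ?_⟩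
  · refine Fin.addCases (fun i => ?_) (fun i => ?_) j
    · rw [Fin.append_left]; exact hp1 i
    · rw [Fin.append_right]; exact hp2 i
  · rw [h y, Fin.sum_univ_add]
    simp only [Fin.append_left, Fin.append_right]
    rw [he1 y, he2 y]

lemma packAt_stack {d : ℕ} {P : Set (Fin d → ℕ)} (u : Fin d → ℕ) (δ : Fin d) (L : List ℕ)
    (h : ∀ ℓ ∈ L, ∀ v, PackAt P v (Function.update u δ ℓ)) :
    ∀ v, PackAt P v (Function.update u δ L.sum) := by
  induction L with
  | nil => intro v; exact packAt_side_zero P (δ := δ) (by simp) v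
  | cons ℓ L ih =>
    intro v
    have h2 := ih (fun ℓ' hℓ' => h ℓ' (List.mem_cons_of_mem _ hℓ'))
    rw [List.sum_cons]
    exact packAt_add (fun y => brickInd_split u v δ ℓ L.sum y)
      (h ℓ List.mem_cons_self v) (h2 _)

lemma packAt_grid {d : ℕ} {P : Set (Fin d → ℕ)} {q : Fin d → ℕ} (hq : q ∈ P) :
    ∀ (I : Finset (Fin d)) (u : Fin d → ℕ), (∀ i, q i ∣ u i) → (∀ i ∉ I, u i = q i) →
      ∀ v, PackAt P v u := by
  intro I
  induction I using Finset.induction_on with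
  | empty =>
    intro u _ hval v
    have : u = q := funext fun i => hval i (Finset.notMem_empty i)
    rw [this]; exact packAt_self hq v
  | @insert a s ha ih =>
    intro u hdvd hval v
    obtain ⟨k, hk⟩ := hdvd a
    set u' := Function.update u a (q a) with hu'
    have hih : ∀ ℓ ∈ List.replicate k (q a), ∀ v', PackAt P v' (Function.update u' a ℓ) := by
      intro ℓ hℓ v'
      rw [List.eq_of_mem_replicate hℓ, Function.update_idem]
      refine ih u' (fun i => ?_) (fun i hi => ?_) v'
      · rcases eq_or_ne i a with rfl | hia
        · simp [hu']
        · rw [hu', Function.update_of_ne hia]; exact hdvd i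
      · rcases eq_or_ne i a with rfl | hia
        · simp [hu']
        · rw [hu', Function.update_of_ne hia]
          exact hval i (by simp [hia, hi])
    have := packAt_stack u' a (List.replicate k (q a)) hih v
    rw [List.sum_replicate, smul_eq_mul, mul_comm, ← hk] at this
    rwa [hu', Function.update_idem, Function.update_eq_self] at this


lemma finset_gcd_bezout (S : Finset ℕ) : ∃ z : ℕ → ℤ, ((S.gcd id : ℕ) : ℤ) = ∑ a ∈ S, z a * a := by
  induction S using Finset.induction_on with
  | empty => exact ⟨0, by simp⟩
  | @insert a s ha ih =>
    obtain ⟨z, hz⟩ := ih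
    refine ⟨fun x => if x = a then Nat.gcdA a (s.gcd id) else z x * Nat.gcdB a (s.gcd id), ?_⟩
    rw [Finset.gcd_insert, Finset.sum_insert ha]
    have : (GCDMonoid.gcd (id a) (s.gcd id) : ℕ) = Nat.gcd a (s.gcd id) := rfl
    rw [this, Nat.gcd_eq_gcd_ab]
    have hsum : ∑ x ∈ s, (if x = a then Nat.gcdA a (s.gcd id) else z x * Nat.gcdB a (s.gcd id)) * (x:ℤ)
        = ∑ x ∈ s, (z x * Nat.gcdB a (s.gcd id)) * (x:ℤ) :=
      Finset.sum_congr rfl fun x hx => by rw [if_neg (by rintro rfl; exact ha hx)]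
    rw [hsum]
    simp only [if_pos rfl]
    push_cast
    rw [show ∑ x ∈ s, z x * Nat.gcdB a (s.gcd id) * x = (∑ x ∈ s, z x * x) * Nat.gcdB a (s.gcd id) by
      rw [Finset.sum_mul]; exact Finset.sum_congr rfl fun x _ => by ring]
    rw [← hz]
    ring

lemma frobenius_rep (S : Finset ℕ) (hS : S.Nonempty) (hpos : ∀ a ∈ S, 0 < a) {n : ℕ}
    (hdvd : S.gcd id ∣ n) (hn : (∑ a ∈ S, a) * (∑ a ∈ S, a) ≤ n) :
    ∃ c : ℕ → ℕ, n = ∑ a ∈ S, c a * a := by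
  obtain ⟨a0, ha0⟩ := hS
  obtain ⟨z, hz⟩ := finset_gcd_bezout S
  obtain ⟨k, hk⟩ := hdvd
  -- w a := k * z a ; n = ∑ w a * a over S (in ℤ)
  set w : ℕ → ℤ := fun a => (k : ℤ) * z a with hw
  have hnsum : (n : ℤ) = ∑ a ∈ S, w a * a := by
    rw [hk]; push_cast; rw [hz, Finset.sum_mul]
    exact Finset.sum_congr rfl fun x _ => by ring
  have ha0pos : 0 < a0 := hpos a0 ha0
  have ha0z : (0:ℤ) < (a0:ℤ) := by exact_mod_cast ha0pos
  -- reduce coefficients mod a0 on S.erase a0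
  set c : ℕ → ℤ := fun a => w a % (a0:ℤ) with hc
  have hcnonneg : ∀ a, 0 ≤ c a := fun a => Int.emod_nonneg _ (ne_of_gt ha0z)
  have hclt : ∀ a, c a < (a0:ℤ) := fun a => Int.emod_lt_of_pos _ ha0z
  set R : ℤ := ∑ a ∈ S.erase a0, c a * a with hR
  have hRnonneg : 0 ≤ R :=
    Finset.sum_nonneg fun a _ => mul_nonneg (hcnonneg a) (by positivity)
  have hdvdKR : (a0:ℤ) ∣ ((n:ℤ) - R) := by
    rw [hnsum, ← Finset.add_sum_erase _ _ ha0, hR, add_sub_assoc, ← Finset.sum_sub_distrib]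
    refine dvd_add (dvd_mul_left _ _) (Finset.dvd_sum fun a _ => ?_)
    rw [← sub_mul]
    exact Dvd.dvd.mul_right (Int.dvd_self_sub_of_emod_eq rfl) _
  have hRlt : R ≤ (n:ℤ) := by
    have h1 : R ≤ ∑ a ∈ S.erase a0, ((a0:ℤ) - 1) * a := by
      refine Finset.sum_le_sum fun a _ => mul_le_mul_of_nonneg_right ?_ (by positivity)
      linarith [hclt a]
    have h2 : ∑ a ∈ S.erase a0, ((a0:ℤ) - 1) * a ≤ ((a0:ℤ) - 1) * ∑ a ∈ S, (a:ℤ) := by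
      rw [← Finset.mul_sum]
      refine mul_le_mul_of_nonneg_left ?_ (by linarith)
      refine Finset.sum_le_sum_of_subset_of_nonneg (Finset.erase_subset _ _)
        fun i _ _ => by exact_mod_cast Nat.zero_le i
    have h3 : (a0:ℤ) ≤ ∑ a ∈ S, (a:ℤ) := by
      refine Finset.single_le_sum (f := fun a : ℕ => (a:ℤ)) (fun i _ => by exact_mod_cast Nat.zero_le i) ha0
    have h4 : ((a0:ℤ) - 1) * ∑ a ∈ S, (a:ℤ) < (∑ a ∈ S, (a:ℤ)) * (∑ a ∈ S, (a:ℤ)) := by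
      have hs : 0 < ∑ a ∈ S, (a:ℤ) := lt_of_lt_of_le ha0z h3
      nlinarith
    have h5 : ((∑ a ∈ S, a : ℕ) : ℤ) * ((∑ a ∈ S, a : ℕ) : ℤ) ≤ (n:ℤ) := by exact_mod_cast hn
    push_cast at h5
    linarith
  obtain ⟨K, hK⟩ := hdvdKR
  have hKnonneg : 0 ≤ K := by
    by_contra h
    push_neg at h
    have : (n:ℤ) - R < 0 := by
      rw [hK]
      exact mul_neg_of_pos_of_neg ha0z h
    linarith
  refine ⟨fun a => if a = a0 then K.toNat else (c a).toNat, ?_⟩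
  have : (n:ℤ) = ∑ a ∈ S, ((if a = a0 then K.toNat else (c a).toNat : ℕ) : ℤ) * a := by
    rw [← Finset.add_sum_erase _ _ ha0]
    rw [if_pos rfl, Int.toNat_of_nonneg hKnonneg]
    have : ∑ a ∈ S.erase a0, ((if a = a0 then K.toNat else (c a).toNat : ℕ) : ℤ) * a = R := by
      rw [hR]
      refine Finset.sum_congr rfl fun a haa => ?_
      rw [if_neg (Finset.ne_of_mem_erase haa), Int.toNat_of_nonneg (hcnonneg a)]
    rw [this]
    linarith [hK]
  exact_mod_cast this


lemma primepow_dvd_lcm {X : Type*} [DecidableEq X] {S : Finset X} {f : X → ℕ} {q : ℕ} (hq : IsPrimePow q)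
    (hf : ∀ x ∈ S, 0 < f x) (hdvd : q ∣ S.lcm f) : ∃ x ∈ S, q ∣ f x := by
  induction S using Finset.induction_on with
  | empty =>
    simp only [Finset.lcm_empty] at hdvd
    exact absurd (Nat.eq_one_of_dvd_one hdvd) hq.ne_one
  | @insert a s ha ih =>
    rw [Finset.lcm_insert] at hdvd
    obtain ⟨p, k, hp, hk, rfl⟩ := hq
    have hfa : f a ≠ 0 := (hf a (Finset.mem_insert_self a s)).ne'
    have hlcm : s.lcm f ≠ 0 := by
      rw [Ne, Finset.lcm_eq_zero_iff]
      rintro ⟨x, hx, hx0⟩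
      exact (hf x (Finset.mem_insert_of_mem hx)).ne' hx0
    have hdvd' : p ^ k ∣ Nat.lcm (f a) (s.lcm f) := hdvd
    have hppd := (Nat.Prime.pow_dvd_iff_le_factorization hp.nat_prime
      (Nat.lcm_ne_zero hfa hlcm)).mp hdvd'
    rw [Nat.factorization_lcm hfa hlcm] at hppd
    simp only [Finsupp.sup_apply, le_sup_iff] at hppd
    rcases hppd with h | h
    · exact ⟨a, Finset.mem_insert_self a s,
        (Nat.Prime.pow_dvd_iff_le_factorization hp.nat_prime hfa).mpr h⟩
    · obtain ⟨x, hx, hx2⟩ := ih (fun x hx => hf x (Finset.mem_insert_of_mem hx))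
        ((Nat.Prime.pow_dvd_iff_le_factorization hp.nat_prime hlcm).mpr h)
      exact ⟨x, Finset.mem_insert_of_mem hx, hx2⟩

lemma exists_primepow_dvd_not_dvd {a b : ℕ} (ha : a ≠ 0) (hb : b ≠ 0) (h : ¬ a ∣ b) :
    ∃ q, IsPrimePow q ∧ q ∣ a ∧ ¬ q ∣ b := by
  have : ¬ a.factorization ≤ b.factorization := by
    rw [Nat.factorization_le_iff_dvd ha hb]; exact h
  rw [Finsupp.le_iff] at this
  push_neg at this
  obtain ⟨p, hmem, hlt⟩ := this
  have hp : p.Prime := Nat.prime_of_mem_primeFactors (by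
    rwa [Nat.support_factorization] at hmem)
  refine ⟨p ^ a.factorization p, ⟨p, a.factorization p, hp.prime, ?_, rfl⟩, ?_, ?_⟩
  · exact lt_of_le_of_lt (Nat.zero_le _) hlt
  · exact Nat.ordProj_dvd a p
  · intro hc
    exact absurd ((Nat.Prime.pow_dvd_iff_le_factorization hp hb).mp hc) (not_le.mpr hlt)

section Char

variable {d : ℕ} {n : Fin d → ℕ}

/-- exponent coefficients -/
def cc (n : Fin d → ℕ) (i : Fin d) : ℂ := 2 * Real.pi * I / (n i)

lemma cc_ne_zero (hn : ∀ i, 0 < n i) (i : Fin d) : cc n i ≠ 0 := by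
  unfold cc
  apply div_ne_zero
  · simp [Real.pi_ne_zero, I_ne_zero]
  · exact_mod_cast (hn i).ne'

lemma key_prod (n : Fin d → ℕ) (b : Fin d → ℕ) (w : Fin d → ℝ) (y : Fin d → ℝ) :
    ((brickInd b w y : ℤ) : ℂ) * Complex.exp (∑ i, cc n i * y i) =
      ∏ i, (Set.Ico (w i) (w i + (b i : ℝ))).indicator
        (fun u : ℝ => Complex.exp (cc n i * u)) (y i) := by
  have h1 : ∀ i, (Set.Ico (w i) (w i + (b i:ℝ))).indicator
      (fun u : ℝ => Complex.exp (cc n i * u)) (y i)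
      = (if (w i ≤ y i ∧ y i < w i + (b i:ℝ)) then 1 else 0) * Complex.exp (cc n i * y i) := by
    intro i
    by_cases h : y i ∈ Set.Ico (w i) (w i + (b i:ℝ))
    · rw [Set.indicator_of_mem h, if_pos (Set.mem_Ico.mp h), one_mul]
    · rw [Set.indicator_of_notMem h, if_neg (fun hc => h (Set.mem_Ico.mpr hc)), zero_mul]
  simp_rw [h1]
  rw [Finset.prod_mul_distrib, Finset.prod_boole, ← Complex.exp_sum]
  unfold brickInd
  by_cases h : ∀ i, w i ≤ y i ∧ y i < w i + (b i : ℝ)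
  · rw [if_pos h, if_pos (fun i _ => h i)]
    norm_num
  · rw [if_neg h, if_neg (fun hc => h (fun i => hc i (Finset.mem_univ i)))]
    norm_num

lemma g_integrable (n : Fin d → ℕ) (a bb : ℝ) (i : Fin d) :
    Integrable ((Set.Ico a bb).indicator (fun u : ℝ => Complex.exp (cc n i * u))) := by
  rw [integrable_indicator_iff measurableSet_Ico]
  exact ((Continuous.integrableOn_Icc (by continuity)).mono_set Set.Ico_subset_Icc_self)

lemma brick_integral (hn : ∀ i, 0 < n i) (b : Fin d → ℕ) (w : Fin d → ℝ) :
    ∫ y : Fin d → ℝ, ((brickInd b w y : ℤ) : ℂ) * Complex.exp (∑ i, cc n i * y i)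
      = ∏ i, (Complex.exp (cc n i * (w i + (b i:ℝ))) - Complex.exp (cc n i * w i)) / cc n i := by
  rw [show (fun y : Fin d → ℝ => ((brickInd b w y : ℤ):ℂ) * Complex.exp (∑ i, cc n i * y i))
      = fun y => ∏ i, (Set.Ico (w i) (w i + (b i:ℝ))).indicator
        (fun u : ℝ => Complex.exp (cc n i * u)) (y i) from funext (key_prod n b w)]
  rw [MeasureTheory.integral_fintype_prod_volume_eq_prod (ι := Fin d)
    (f := fun i (u : ℝ) => (Set.Ico (w i) (w i + (b i:ℝ))).indicator
      (fun u : ℝ => Complex.exp (cc n i * u)) u)]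
  refine Finset.prod_congr rfl fun i _ => ?_
  rw [integral_indicator measurableSet_Ico]
  rw [MeasureTheory.integral_Ico_eq_integral_Ioo, ← MeasureTheory.integral_Ioc_eq_integral_Ioo]
  rw [← intervalIntegral.integral_of_le (by simp : w i ≤ w i + (b i:ℝ))]
  rw [integral_exp_mul_complex (cc_ne_zero hn i)]
  push_cast
  ring_nf

end Char

lemma tilable_char {d : ℕ} {P : Set (Fin d → ℕ)} {t : Fin d → ℕ}
    (htil : Tilable P t) (n : Fin d → ℕ) (hn : ∀ i, 0 < n i)
    (hkill : ∀ b ∈ P, ∃ i, n i ∣ b i) : ∃ i, n i ∣ t i := by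
  obtain ⟨m, p, w, γ, hp, heq⟩ := htil
  -- integrate the tiling identity against the character
  have hint : ∀ (b : Fin d → ℕ) (ww : Fin d → ℝ),
      Integrable (fun y : Fin d → ℝ => ((brickInd b ww y : ℤ) : ℂ)
        * Complex.exp (∑ i, cc n i * y i)) := by
    intro b ww
    rw [show (fun y : Fin d → ℝ => ((brickInd b ww y : ℤ):ℂ) * Complex.exp (∑ i, cc n i * y i))
      = fun y => ∏ i, (Set.Ico (ww i) (ww i + (b i:ℝ))).indicator
        (fun u : ℝ => Complex.exp (cc n i * u)) (y i) from funext (key_prod n b ww)]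
    exact Integrable.fintype_prod (fun i => g_integrable n _ _ i)
  have main : (∏ i, (Complex.exp (cc n i * ((0:ℝ) + (t i:ℝ))) - Complex.exp (cc n i * (0:ℝ))) / cc n i)
      = ∑ j, (γ j : ℂ) * ∏ i, (Complex.exp (cc n i * (w j i + (p j i:ℝ)))
          - Complex.exp (cc n i * (w j i))) / cc n i := by
    rw [← brick_integral hn t (fun _ => 0)]
    have : (fun y : Fin d → ℝ => ((brickInd t (fun _ => 0) y : ℤ):ℂ)
        * Complex.exp (∑ i, cc n i * y i))
        = fun y => ∑ j, (γ j : ℂ) * (((brickInd (p j) (w j) y : ℤ):ℂ)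
          * Complex.exp (∑ i, cc n i * y i)) := by
      funext y
      rw_mod_cast [heq y]
      push_cast
      rw [Finset.sum_mul]
      exact Finset.sum_congr rfl fun j _ => by ring
    rw [this, integral_finset_sum _ (fun j _ => (hint (p j) (w j)).const_mul _)]
    refine Finset.sum_congr rfl fun j _ => ?_
    rw [MeasureTheory.integral_const_mul, brick_integral hn]
  -- every brick term vanishes
  have hvanish : ∀ j, (∏ i, (Complex.exp (cc n i * (w j i + (p j i:ℝ)))
      - Complex.exp (cc n i * (w j i))) / cc n i) = 0 := by
    intro j
    obtain ⟨i0, hi0⟩ := hkill (p j) (hp j)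
    apply Finset.prod_eq_zero (Finset.mem_univ i0)
    obtain ⟨k, hk⟩ := hi0
    have hexp : Complex.exp (cc n i0 * (p j i0 : ℝ)) = 1 := by
      have : cc n i0 * (p j i0 : ℝ) = (k : ℂ) * (2 * Real.pi * I) := by
        unfold cc
        have hn0 : ((n i0 : ℂ)) ≠ 0 := by exact_mod_cast (hn i0).ne'
        field_simp
        push_cast [hk]
        ring
      rw [this]
      exact_mod_cast Complex.exp_int_mul_two_pi_mul_I k
    have : Complex.exp (cc n i0 * ((w j i0 : ℝ) + (p j i0 : ℝ)))
        = Complex.exp (cc n i0 * (w j i0 : ℝ)) := by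
      rw [mul_add, Complex.exp_add, hexp, mul_one]
    rw [div_eq_zero_iff]
    left
    rw [sub_eq_zero, mul_add, Complex.exp_add]
    rw [show ((((p j i0 : ℕ) : ℝ)) : ℂ) = ((p j i0 : ℕ) : ℂ) by push_cast; ring] at hexp ⊢
    rw [hexp, mul_one]
  rw [Finset.sum_congr rfl (fun j _ => by rw [hvanish j, mul_zero]), Finset.sum_const_zero] at main
  obtain ⟨i, -, hi⟩ := Finset.prod_eq_zero_iff.mp main
  rw [div_eq_zero_iff] at hi
  rcases hi with hi | hi
  · rw [sub_eq_zero] at hi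
    have h1 : Complex.exp (cc n i * ((t i : ℕ) : ℂ)) = 1 := by
      simp only [Complex.ofReal_zero, zero_add, mul_zero, Complex.exp_zero] at hi
      push_cast at hi ⊢
      exact hi
    rw [Complex.exp_eq_one_iff] at h1
    obtain ⟨k, hk⟩ := h1
    have hn0 : ((n i : ℂ)) ≠ 0 := by exact_mod_cast (hn i).ne'
    have h2π : (2 * (Real.pi:ℂ) * I) ≠ 0 := by simp [Real.pi_ne_zero, I_ne_zero]
    have hTC : ((t i : ℂ)) = (k : ℂ) * (n i : ℂ) := by
      unfold cc at hk
      field_simp at hk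
      exact mul_left_cancel₀ h2π (by rw [hk]; ring)
    have hTZ : ((t i : ℤ)) = k * ((n i : ℕ) : ℤ) := by exact_mod_cast hTC
    exact ⟨i, Int.natCast_dvd_natCast.mp ⟨k, by rw [hTZ]; ring⟩⟩
  · exact absurd hi (cc_ne_zero hn i)

def GoodPack {d : ℕ} (P : Set (Fin d → ℕ)) (N : ℕ) (q : Fin d → ℕ) (D : Finset (Fin d)) : Prop :=
  ∀ u : Fin d → ℕ, (∀ i, q i ∣ u i) → (∀ i ∈ D, N < u i) → ∀ v, PackAt P v u

lemma goodPack_base {d : ℕ} {P : Set (Fin d → ℕ)} {N : ℕ} {q : Fin d → ℕ} (hq : q ∈ P) :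
    GoodPack P N q ∅ :=
  fun u hdvd _ v => packAt_grid hq Finset.univ u hdvd
    (fun i hi => absurd (Finset.mem_univ i) hi) v

lemma packAt_stack_counts {d : ℕ} {P : Set (Fin d → ℕ)} (u : Fin d → ℕ) (δ : Fin d)
    (S : Finset ℕ) (c : ℕ → ℕ)
    (h : ∀ s ∈ S, ∀ v, PackAt P v (Function.update u δ s)) :
    ∀ v, PackAt P v (Function.update u δ (∑ s ∈ S, c s * s)) := by
  induction S using Finset.induction_on with
  | empty => intro v; exact packAt_side_zero P (δ := δ) (by simp) v
  | @insert a s ha ih =>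
    intro v
    rw [Finset.sum_insert ha]
    refine packAt_add (fun y => brickInd_split u v δ (c a * a) (∑ s ∈ s, c s * s) y) ?_
      (ih (fun s hs => h s (Finset.mem_insert_of_mem hs)) _)
    have := packAt_stack u δ (List.replicate (c a) a)
      (fun ℓ hℓ v' => by
        rw [List.eq_of_mem_replicate hℓ]; exact h a (Finset.mem_insert_self _ _) v') v
    rwa [List.sum_replicate, smul_eq_mul] at this

lemma goodPack_comb {d : ℕ} {P : Set (Fin d → ℕ)} {N : ℕ} {D : Finset (Fin d)} {δ : Fin d}
    (hδ : δ ∉ D) (A : Finset (Fin d → ℕ)) (hA : A.Nonempty)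
    (hpos : ∀ a ∈ A, ∀ i, 0 < a i)
    (hgp : ∀ a ∈ A, GoodPack P N a D)
    (hfrob : (∑ s ∈ A.image (fun a => a δ), s) * (∑ s ∈ A.image (fun a => a δ), s) ≤ N + 1) :
    GoodPack P N (combN δ A) (insert δ D) := by
  intro u hdvd hbig v
  set S := A.image (fun a => a δ) with hS
  have hSne : S.Nonempty := hA.image _
  have hSpos : ∀ s ∈ S, 0 < s := by
    intro s hs; obtain ⟨a, ha, rfl⟩ := Finset.mem_image.mp hs; exact hpos a ha δ
  have hgcd : S.gcd id ∣ u δ := by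
    have h1 := hdvd δ
    rw [show combN δ A δ = A.gcd (fun b => b δ) by simp [combN]] at h1
    rw [hS, Finset.gcd_image]
    exact h1
  have hbound : (∑ s ∈ S, s) * (∑ s ∈ S, s) ≤ u δ :=
    le_trans hfrob (hbig δ (Finset.mem_insert_self _ _))
  obtain ⟨c, hc⟩ := frobenius_rep S hSne hSpos hgcd hbound
  have hslab : ∀ s ∈ S, ∀ v', PackAt P v' (Function.update u δ s) := by
    intro s hs v'
    obtain ⟨a, ha, rfl⟩ := Finset.mem_image.mp hs
    refine hgp a ha _ (fun i => ?_) (fun i hi => ?_) v'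
    · rcases eq_or_ne i δ with rfl | hne
      · simp
      · rw [Function.update_of_ne hne]
        refine dvd_trans ?_ (hdvd i)
        rw [show combN δ A i = A.lcm (fun b => b i) by simp [combN, hne]]
        exact Finset.dvd_lcm ha
    · have hne : i ≠ δ := fun h => hδ (h ▸ hi)
      rw [Function.update_of_ne hne]
      exact hbig i (Finset.mem_insert_of_mem hi)
  have := packAt_stack_counts u δ S c hslab v
  rwa [← hc, Function.update_eq_self] at this

lemma lemmaE {d : ℕ} (P : Set (Fin d → ℕ)) (N L : ℕ) (hL : 0 < L)
    (hNL : L * L * (L * L) ≤ N + 1) (t : Fin d → ℕ) (ht : ∀ i, N < t i) :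
    ∀ (U : Finset (Fin d)) (Q : Finset (Fin d → ℕ)),
      (∀ q ∈ Q, ∀ i, 0 < q i) →
      (∀ q ∈ Q, ∀ i, q i ∣ L) →
      (∀ q ∈ Q, ∀ i, i ∉ U → q i ∣ t i) →
      (∀ q ∈ Q, GoodPack P N q Uᶜ) →
      (∀ n : Fin d → ℕ, (∀ i ∈ U, IsPrimePow (n i)) →
        (∀ b ∈ Q, ∃ i ∈ U, n i ∣ b i) → ∃ i ∈ U, n i ∣ t i) →
      PackAt P (fun _ => 0) t := by
  intro U
  induction U using Finset.strongInduction with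
  | _ U ih =>
    intro Q hQpos hQL hQt hQgp hH
    rcases Finset.eq_empty_or_nonempty U with rfl | ⟨δ, hδ⟩
    · rcases Finset.eq_empty_or_nonempty Q with rfl | ⟨q, hq⟩
      · exfalso
        obtain ⟨i, hi, -⟩ := hH (fun _ => 2)
          (fun i hi => absurd hi (Finset.notMem_empty i))
          (fun b hb => absurd hb (Finset.notMem_empty b))
        exact Finset.notMem_empty i hi
      · have h1 : ∀ i, q i ∣ t i := fun i => hQt q hq i (Finset.notMem_empty i)
        have h2 := hQgp q hq
        rw [Finset.compl_empty] at h2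
        exact h2 t h1 (fun i _ => ht i) (fun _ => 0)
    · set U₀ := U.erase δ with hU₀def
      have hU₀ : U₀ ⊂ U := Finset.erase_ssubset hδ
      set 𝒜 : Finset (Finset (Fin d → ℕ)) :=
        Q.powerset.filter (fun A => A.Nonempty ∧ A.gcd (fun b => b δ) ∣ t δ) with h𝒜
      have h𝒜sub : ∀ A ∈ 𝒜, A ⊆ Q := fun A hA =>
        Finset.mem_powerset.mp (Finset.mem_filter.mp hA).1
      have h𝒜ne : ∀ A ∈ 𝒜, A.Nonempty := fun A hA => (Finset.mem_filter.mp hA).2.1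
      have h𝒜gcd : ∀ A ∈ 𝒜, A.gcd (fun b => b δ) ∣ t δ := fun A hA =>
        (Finset.mem_filter.mp hA).2.2
      set Q' := 𝒜.image (combN δ) with hQ'
      have hcomb_pos : ∀ A ∈ 𝒜, ∀ i, 0 < combN δ A i := by
        intro A hA i
        obtain ⟨a, ha⟩ := h𝒜ne A hA
        rcases eq_or_ne i δ with hE | hne
        · rw [hE, show combN δ A δ = A.gcd (fun b => b δ) by simp [combN]]
          exact Nat.pos_of_dvd_of_pos (Finset.gcd_dvd ha) (hQpos a (h𝒜sub A hA ha) δ)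
        · rw [show combN δ A i = A.lcm (fun b => b i) by simp [combN, hne]]
          refine Nat.pos_of_ne_zero fun h0 => ?_
          rw [Finset.lcm_eq_zero_iff] at h0
          obtain ⟨x, hx, hx0⟩ := h0
          exact (hQpos x (h𝒜sub A hA hx) i).ne' hx0
      have hcomb_L : ∀ A ∈ 𝒜, ∀ i, combN δ A i ∣ L := by
        intro A hA i
        obtain ⟨a, ha⟩ := h𝒜ne A hA
        rcases eq_or_ne i δ with hE | hne
        · rw [hE, show combN δ A δ = A.gcd (fun b => b δ) by simp [combN]]
          exact dvd_trans (Finset.gcd_dvd ha) (hQL a (h𝒜sub A hA ha) δ)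
        · rw [show combN δ A i = A.lcm (fun b => b i) by simp [combN, hne]]
          exact Finset.lcm_dvd (fun x hx => hQL x (h𝒜sub A hA hx) i)
      refine ih U₀ hU₀ Q' ?_ ?_ ?_ ?_ ?_
      · rintro q' hq' i
        obtain ⟨A, hA, rfl⟩ := Finset.mem_image.mp hq'
        exact hcomb_pos A hA i
      · rintro q' hq' i
        obtain ⟨A, hA, rfl⟩ := Finset.mem_image.mp hq'
        exact hcomb_L A hA i
      · rintro q' hq' i hi
        obtain ⟨A, hA, rfl⟩ := Finset.mem_image.mp hq'
        rcases eq_or_ne i δ with hE | hne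
        · rw [hE, show combN δ A δ = A.gcd (fun b => b δ) by simp [combN]]
          exact h𝒜gcd A hA
        · have hiU : i ∉ U := by
            intro hiU
            exact hi (Finset.mem_erase.mpr ⟨hne, hiU⟩)
          rw [show combN δ A i = A.lcm (fun b => b i) by simp [combN, hne]]
          exact Finset.lcm_dvd (fun x hx => hQt x (h𝒜sub A hA hx) i hiU)
      · rintro q' hq'
        obtain ⟨A, hA, rfl⟩ := Finset.mem_image.mp hq'
        have hcompl : U₀ᶜ = insert δ Uᶜ := by
          rw [hU₀def, Finset.compl_erase]
        rw [hcompl]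
        refine goodPack_comb (by simp [hδ]) A (h𝒜ne A hA)
          (fun a ha i => hQpos a (h𝒜sub A hA ha) i)
          (fun a ha => hQgp a (h𝒜sub A hA ha)) ?_
        -- Frobenius bound
        have hsub : A.image (fun a => a δ) ⊆ Finset.Icc 1 L := by
          intro s hs
          obtain ⟨a, ha, rfl⟩ := Finset.mem_image.mp hs
          exact Finset.mem_Icc.mpr ⟨hQpos a (h𝒜sub A hA ha) δ,
            Nat.le_of_dvd hL (hQL a (h𝒜sub A hA ha) δ)⟩
        have hcard : (A.image (fun a => a δ)).card ≤ L := by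
          have := Finset.card_le_card hsub
          simpa using this
        have hsum : (∑ s ∈ A.image (fun a => a δ), s) ≤ L * L := by
          calc (∑ s ∈ A.image (fun a => a δ), s)
              ≤ (A.image (fun a => a δ)).card * L := by
                refine Finset.sum_le_card_nsmul _ _ L fun s hs => ?_
                exact (Finset.mem_Icc.mp (hsub hs)).2
            _ ≤ L * L := Nat.mul_le_mul_right L hcard
        exact le_trans (Nat.mul_le_mul hsum hsum) hNL
      · -- the arithmetic heart
        intro n hppow hkill
        by_contra hcon
        push_neg at hcon
        set B := Q.filter (fun b => ∀ i ∈ U₀, ¬ n i ∣ b i) with hB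
        have hBQ : B ⊆ Q := Finset.filter_subset _ _
        by_cases hBA : B.Nonempty ∧ B.gcd (fun b => b δ) ∣ t δ
        · -- B ∈ 𝒜, contradiction via prime power dividing lcm
          have hBmem : B ∈ 𝒜 := Finset.mem_filter.mpr ⟨Finset.mem_powerset.mpr hBQ, hBA⟩
          obtain ⟨i, hiU₀, hdvd⟩ := hkill (combN δ B) (Finset.mem_image_of_mem _ hBmem)
          have hne : i ≠ δ := Finset.ne_of_mem_erase hiU₀
          rw [show combN δ B i = B.lcm (fun b => b i) by simp [combN, hne]] at hdvd
          obtain ⟨b, hb, hnb⟩ := primepow_dvd_lcm (hppow i hiU₀)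
            (fun x hx => hQpos x (hBQ hx) i) hdvd
          exact (Finset.mem_filter.mp hb).2 i hiU₀ hnb
        · -- build a violating modulus for (Q, U)
          have hq : ∃ q : ℕ, IsPrimePow q ∧ ¬ q ∣ t δ ∧ ∀ b ∈ B, q ∣ b δ := by
            rcases Finset.eq_empty_or_nonempty B with hBe | hBne
            · obtain ⟨p, hple, hp⟩ := Nat.exists_infinite_primes (t δ + 1)
              refine ⟨p, hp.isPrimePow, fun hdvd => ?_, fun b hb => ?_⟩
              · have := Nat.le_of_dvd (lt_of_le_of_lt (Nat.zero_le N) (ht δ)) hdvd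
                omega
              · rw [hBe] at hb; exact absurd hb (Finset.notMem_empty b)
            · have hgcd_pos : 0 < B.gcd (fun b => b δ) := by
                obtain ⟨b, hb⟩ := hBne
                exact Nat.pos_of_dvd_of_pos (Finset.gcd_dvd hb) (hQpos b (hBQ hb) δ)
              have hgnd : ¬ B.gcd (fun b => b δ) ∣ t δ := fun h => hBA ⟨hBne, h⟩
              obtain ⟨q, hqpp, hqg, hqt⟩ := exists_primepow_dvd_not_dvd
                hgcd_pos.ne' (lt_of_le_of_lt (Nat.zero_le N) (ht δ)).ne' hgnd
              exact ⟨q, hqpp, hqt, fun b hb => dvd_trans hqg (Finset.gcd_dvd hb)⟩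
          obtain ⟨q, hqpp, hqt, hqB⟩ := hq
          set n' := Function.update n δ q with hn'
          have hside1 : ∀ i ∈ U, IsPrimePow (n' i) := by
            intro i hiU
            rcases eq_or_ne i δ with hE | hne
            · rw [hE, hn', Function.update_self]; exact hqpp
            · rw [hn', Function.update_of_ne hne]
              exact hppow i (Finset.mem_erase.mpr ⟨hne, hiU⟩)
          have hside2 : ∀ b ∈ Q, ∃ i ∈ U, n' i ∣ b i := by
            intro b hb
            by_cases hbB : b ∈ B
            · exact ⟨δ, hδ, by rw [hn', Function.update_self]; exact hqB b hbB⟩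
            · have hni : ¬ ∀ i ∈ U₀, ¬ n i ∣ b i := fun hcon' =>
                hbB (Finset.mem_filter.mpr ⟨hb, hcon'⟩)
              push_neg at hni
              obtain ⟨i, hiU₀, hdvd⟩ := hni
              refine ⟨i, Finset.mem_of_mem_erase hiU₀, ?_⟩
              rw [hn', Function.update_of_ne (Finset.ne_of_mem_erase hiU₀)]
              exact hdvd
          obtain ⟨i, hiU, hidvd⟩ := hH n' hside1 hside2
          rcases eq_or_ne i δ with hE | hne
          · rw [hE, hn', Function.update_self] at hidvd
            exact hqt hidvd
          · rw [hn', Function.update_of_ne hne] at hidvd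
            exact hcon i (Finset.mem_erase.mpr ⟨hne, hiU⟩) hidvd

/-- For every dimension `d ≥ 1` and every nonempty finite set `P` of
`d`-dimensional bricks, there exists an integer `N` such that every brick `t` all of
whose sidelengths exceed `N` and which is tilable by `P` is in fact packable by `P`. -/
theorem statement1 {d : ℕ} (hd : 1 ≤ d) (P : Finset (Fin d → ℕ))
    (hne : P.Nonempty) (hpos : ∀ b ∈ P, ∀ i, 0 < b i) :
    ∃ N : ℕ, ∀ t : Fin d → ℕ, (∀ i, N < t i) →
      Tilable (↑P : Set (Fin d → ℕ)) t → Packable (↑P : Set (Fin d → ℕ)) t := by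
  classical
  set L := ∏ b ∈ P, ∏ i, b i with hLdef
  have hLpos : 0 < L := Finset.prod_pos fun b hb => Finset.prod_pos fun i _ => hpos b hb i
  have hdvdL : ∀ b ∈ P, ∀ i, b i ∣ L := fun b hb i =>
    dvd_trans (Finset.dvd_prod_of_mem _ (Finset.mem_univ i))
      (Finset.dvd_prod_of_mem (fun b => ∏ i, b i) hb)
  refine ⟨L * L * (L * L), fun t ht htil => ?_⟩
  have hmain : PackAt (↑P : Set (Fin d → ℕ)) (fun _ => 0) t := by
    refine lemmaE (↑P) (L * L * (L * L)) L hLpos (Nat.le_succ _) t ht Finset.univ P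
      (fun q hq i => hpos q hq i) (fun q hq i => hdvdL q hq i)
      (fun q hq i hi => absurd (Finset.mem_univ i) hi)
      (fun q hq => ?_) (fun n hppow hkill => ?_)
    · rw [Finset.compl_univ]
      exact goodPack_base (Finset.mem_coe.mpr hq)
    · have hnpos : ∀ i, 0 < n i := fun i => (hppow i (Finset.mem_univ i)).pos
      obtain ⟨i, hi⟩ := tilable_char htil n hnpos
        (fun b hb => (hkill b (Finset.mem_coe.mp hb)).imp fun i h => h.2)
      exact ⟨i, Finset.mem_univ i, hi⟩
  obtain ⟨m, p, w, hp, heqn⟩ := hmain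
  exact ⟨m, p, w, hp, heqn⟩
end
end

section
/- (Equality Theorem.) For every dimension d ≥ 1 and every nonempty finite set P of d-dimensional bricks, M(P) equals the set of ⪯-minimal elements of Ext_{1..d}(P) = Ext_d(Ext_{d−1}(⋯ Ext_1(P) ⋯)). Equivalently, a brick t is tilable by P if and only if there exists b ∈ Ext_{1..d}(P) with b ⪯ t. -/
open scoped Classical

noncomputable section

namespace BrickAux



variable {d : ℕ}

/-- The set of indicator functions of translates of members of `P`. -/
def Trans (P : Set (Fin d → ℕ)) : Set ((Fin d → ℝ) → ℤ) :=
  {f | ∃ p ∈ P, ∃ w : Fin d → ℝ, f = brickInd p w}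

lemma tilable_iff_span {P : Set (Fin d → ℕ)} {t : Fin d → ℕ} :
    Tilable P t ↔ brickInd t (fun _ => 0) ∈ Submodule.span ℤ (Trans P) := by
  constructor
  · rintro ⟨m, p, w, γ, hp, hid⟩
    have h : brickInd t (fun _ => 0) = ∑ j, γ j • brickInd (p j) (w j) := by
      funext y
      have := hid y
      simpa [Finset.sum_apply] using this
    rw [h]
    exact Submodule.sum_mem _ fun j _ => Submodule.smul_mem _ _
      (Submodule.subset_span ⟨p j, hp j, w j, rfl⟩)
  · intro h
    rw [Submodule.mem_span_set'] at h
    obtain ⟨m, γ, g, hsum⟩ := h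
    choose p hp w hw using fun j => (g j).2
    refine ⟨m, p, w, γ, hp, fun y => ?_⟩
    rw [← hsum]
    simp [Finset.sum_apply, ← hw]

lemma brickInd_translate (b : Fin d → ℕ) (w v : Fin d → ℝ) (y : Fin d → ℝ) :
    brickInd b w (fun i => y i - v i) = brickInd b (fun i => w i + v i) y := by
  unfold brickInd
  refine if_congr (forall_congr' fun i => ?_) rfl rfl
  dsimp only
  constructor <;> intro h <;> constructor <;> [skip; skip; skip; skip] <;> linarith [h.1, h.2]

lemma mem_span_trans_of_tilable {P : Set (Fin d → ℕ)} {q : Fin d → ℕ}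
    (h : Tilable P q) (v : Fin d → ℝ) :
    brickInd q v ∈ Submodule.span ℤ (Trans P) := by
  obtain ⟨m, p, w, γ, hp, hid⟩ := h
  have key : brickInd q v = ∑ j, γ j • brickInd (p j) (fun i => w j i + v i) := by
    funext y
    have h1 : brickInd q v y = brickInd q (fun _ => (0:ℝ)) (fun i => y i - v i) := by
      rw [brickInd_translate]
      congr 1
      funext i
      ring
    rw [h1, hid (fun i => y i - v i)]
    simp only [Finset.sum_apply, Pi.smul_apply, smul_eq_mul]
    congr 1
    funext j
    rw [brickInd_translate]
  rw [key]
  exact Submodule.sum_mem _ fun j _ => Submodule.smul_mem _ _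
    (Submodule.subset_span ⟨p j, hp j, _, rfl⟩)

lemma tilable_trans {P Q : Set (Fin d → ℕ)} {t : Fin d → ℕ}
    (hQ : ∀ q ∈ Q, Tilable P q) (h : Tilable Q t) : Tilable P t := by
  rw [tilable_iff_span] at h ⊢
  refine Submodule.span_le.mpr ?_ h
  rintro f ⟨q, hq, v, rfl⟩
  exact mem_span_trans_of_tilable (hQ q hq) v

lemma tilable_mono {P P' : Set (Fin d → ℕ)} {t : Fin d → ℕ} (h : P ⊆ P') :
    Tilable P t → Tilable P' t := by
  rintro ⟨m, p, w, γ, hp, hid⟩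
  exact ⟨m, p, w, γ, fun j => h (hp j), hid⟩

lemma tilable_self {P : Set (Fin d → ℕ)} {t : Fin d → ℕ} (h : t ∈ P) : Tilable P t :=
  tilable_iff_span.mpr (Submodule.subset_span ⟨t, h, _, rfl⟩)

/-! ### One-dimensional machinery -/

def ind1 (L : ℕ) (u : ℝ) (x : ℝ) : ℤ := if u ≤ x ∧ x < u + L then 1 else 0

def heavi (u : ℝ) (x : ℝ) : ℤ := if u ≤ x then 1 else 0

lemma ind1_eq (L : ℕ) (u : ℝ) : ind1 L u = heavi u - heavi (u + L) := by
  funext x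
  simp only [ind1, heavi, Pi.sub_apply]
  have hL : (0:ℝ) ≤ L := Nat.cast_nonneg L
  by_cases h1 : u ≤ x <;> by_cases h2 : x < u + L
  · rw [if_pos ⟨h1, h2⟩, if_pos h1, if_neg (by linarith)]; ring
  · rw [if_neg (by tauto), if_pos h1, if_pos (by linarith)]; ring
  · rw [if_neg (by tauto), if_neg h1, if_neg (by linarith)]; ring
  · exact absurd (by linarith : u ≤ x) h1

def gen1 (Ls : Set ℕ) : Set (ℝ → ℤ) := {f | ∃ L ∈ Ls, ∃ u, f = ind1 L u}

lemma heavi_sub_mem (Ls : Set ℕ) {c : ℝ}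
    (hc : c ∈ AddSubgroup.closure ((fun n : ℕ => (n:ℝ)) '' Ls)) (u : ℝ) :
    heavi u - heavi (u + c) ∈ Submodule.span ℤ (gen1 Ls) := by
  set G : AddSubgroup ℝ :=
    { carrier := {c | ∀ u : ℝ, heavi u - heavi (u + c) ∈ Submodule.span ℤ (gen1 Ls)}
      zero_mem' := by intro u; simp
      add_mem' := by
        intro a b ha hb u
        have : heavi u - heavi (u + (a + b)) =
            (heavi u - heavi (u + a)) + (heavi (u + a) - heavi (u + a + b)) := by
          rw [add_assoc]; ring
        rw [this]
        exact Submodule.add_mem _ (ha u) (hb (u + a))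
      neg_mem' := by
        intro a ha u
        have : heavi u - heavi (u + -a) = -(heavi (u - a) - heavi (u - a + a)) := by
          have e1 : u - a + a = u := by ring
          have e2 : u + -a = u - a := by ring
          rw [e1, e2]; ring
        rw [this]
        exact Submodule.neg_mem _ (ha (u - a)) }
  have hle : AddSubgroup.closure ((fun n : ℕ => (n:ℝ)) '' Ls) ≤ G := by
    rw [AddSubgroup.closure_le]
    rintro x ⟨L, hL, rfl⟩ u
    rw [← ind1_eq]
    exact Submodule.subset_span ⟨L, hL, u, rfl⟩
  exact hle hc u

lemma ind1_mem_span {Ls : Set ℕ} {c : ℕ}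
    (hc : (c:ℝ) ∈ AddSubgroup.closure ((fun n : ℕ => (n:ℝ)) '' Ls)) :
    ind1 c 0 ∈ Submodule.span ℤ (gen1 Ls) := by
  rw [ind1_eq]
  exact heavi_sub_mem _ hc 0

lemma nat_gcd_closure {α : Type*} [DecidableEq α] (A : Finset α) (f : α → ℕ) (S : Set ℝ)
    (hS : ∀ a ∈ A, ((f a : ℝ)) ∈ AddSubgroup.closure S) :
    (((A.gcd f : ℕ) : ℝ)) ∈ AddSubgroup.closure S := by
  induction A using Finset.induction with
  | empty => simp only [Finset.gcd_empty]; exact_mod_cast AddSubgroup.zero_mem _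
  | @insert a s ha ih =>
    rw [Finset.gcd_insert]
    have hfa := hS a (Finset.mem_insert_self a s)
    have hgs := ih (fun x hx => hS x (Finset.mem_insert_of_mem hx))
    set x := f a with hx
    set y := s.gcd f with hy
    have hg : GCDMonoid.gcd x y = Nat.gcd x y := rfl
    have hxy : ((Nat.gcd x y : ℕ) : ℤ) = x * Nat.gcdA x y + y * Nat.gcdB x y :=
      Nat.gcd_eq_gcd_ab x y
    have hreal : ((Nat.gcd x y : ℕ) : ℝ) =
        (Nat.gcdA x y) • (x:ℝ) + (Nat.gcdB x y) • (y:ℝ) := by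
      have h2 := congrArg (fun z : ℤ => (z : ℝ)) hxy
      push_cast at h2 ⊢
      rw [h2, zsmul_eq_mul, zsmul_eq_mul]
      push_cast
      ring
    rw [hg, hreal]
    exact AddSubgroup.add_mem _ (AddSubgroup.zsmul_mem _ hfa _) (AddSubgroup.zsmul_mem _ hgs _)

/-! ### Surgery in one direction -/

def Phi (δ : Fin d) (t : Fin d → ℕ) : (ℝ → ℤ) →ₗ[ℤ] ((Fin d → ℝ) → ℤ) where
  toFun f := fun y => f (y δ) *
    (if ∀ j, j ≠ δ → ((0:ℝ) ≤ y j ∧ y j < t j) then 1 else 0)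
  map_add' f g := by
    funext y
    by_cases hc : ∀ j : Fin d, ¬j = δ → ((0:ℝ) ≤ y j ∧ y j < t j)
    · simp only [Pi.add_apply, if_pos hc]; ring
    · simp only [Pi.add_apply, if_neg hc]; ring
  map_smul' c f := by
    funext y
    by_cases hc : ∀ j : Fin d, ¬j = δ → ((0:ℝ) ≤ y j ∧ y j < t j)
    · simp only [Pi.smul_apply, smul_eq_mul, RingHom.id_apply, if_pos hc]; ring
    · simp only [Pi.smul_apply, smul_eq_mul, RingHom.id_apply, if_neg hc]; ring

lemma Phi_ind1 (δ : Fin d) (t : Fin d → ℕ) (b : Fin d → ℕ)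
    (hb : ∀ j, j ≠ δ → b j = t j) (u : ℝ) :
    Phi δ t (ind1 (b δ) u) = brickInd b (Function.update (fun _ => (0:ℝ)) δ u) := by
  funext y
  simp only [Phi, LinearMap.coe_mk, AddHom.coe_mk, ind1, brickInd]
  have hcond : (∀ i, Function.update (fun _ => (0:ℝ)) δ u i ≤ y i ∧
      y i < Function.update (fun _ => (0:ℝ)) δ u i + (b i : ℝ)) ↔
      ((u ≤ y δ ∧ y δ < u + b δ) ∧ ∀ j, j ≠ δ → ((0:ℝ) ≤ y j ∧ y j < t j)) := by
    constructor
    · intro h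
      refine ⟨by simpa using h δ, fun j hj => ?_⟩
      have := h j
      rw [Function.update_of_ne hj] at this
      rw [← hb j hj]
      simpa using this
    · rintro ⟨h1, h2⟩ i
      by_cases hi : i = δ
      · subst hi; simpa using h1
      · rw [Function.update_of_ne hi]
        have := h2 i hi
        rw [← hb i hi] at this
        simpa using this
  by_cases h1 : u ≤ y δ ∧ y δ < u + (b δ : ℝ) <;>
    by_cases h2 : ∀ j, j ≠ δ → ((0:ℝ) ≤ y j ∧ y j < t j)
  · rw [if_pos h1, if_pos h2, if_pos (hcond.mpr ⟨h1, h2⟩)]; ring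
  · rw [if_pos h1, if_neg h2, if_neg (fun h => h2 (hcond.mp h).2)]; ring
  · rw [if_neg h1, if_pos h2, if_neg (fun h => h1 (hcond.mp h).1)]; ring
  · rw [if_neg h1, if_neg h2, if_neg (fun h => h1 (hcond.mp h).1)]; ring

lemma surgery {Q : Set (Fin d → ℕ)} {t : Fin d → ℕ} {δ : Fin d}
    (h : ((t δ : ℝ)) ∈ AddSubgroup.closure
      ((fun n : ℕ => (n:ℝ)) '' {L | ∃ b ∈ Q, (∀ j, j ≠ δ → b j = t j) ∧ L = b δ})) :
    Tilable Q t := by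
  set Ls : Set ℕ := {L | ∃ b ∈ Q, (∀ j, j ≠ δ → b j = t j) ∧ L = b δ} with hLs
  have h1 : ind1 (t δ) 0 ∈ Submodule.span ℤ (gen1 Ls) := ind1_mem_span h
  rw [tilable_iff_span]
  have h2 := Submodule.apply_mem_span_image_of_mem_span (Phi δ t) h1
  have h3 : (Phi δ t) '' (gen1 Ls) ⊆ Trans Q := by
    rintro f ⟨g, ⟨L, ⟨b, hbQ, hbt, rfl⟩, u, rfl⟩, rfl⟩
    exact ⟨b, hbQ, _, Phi_ind1 δ t b hbt u⟩
  have h4 : brickInd t (fun _ => 0) = Phi δ t (ind1 (t δ) 0) := by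
    rw [Phi_ind1 δ t t (fun _ _ => rfl) 0]
    congr 1
    funext i
    simp [Function.update_apply]
  rw [h4]
  exact Submodule.span_mono h3 h2

/-! ### Stacking: a brick tiles any brick it divides -/

lemma tilable_of_dvd {b t : Fin d → ℕ} (h : ∀ i, b i ∣ t i) :
    Tilable {b} t := by
  set u : ℕ → (Fin d → ℕ) := fun k i => if (i : ℕ) < k then t i else b i with hu
  have key : ∀ k, Tilable {b} (u k) := by
    intro k
    induction k with
    | zero => exact tilable_self (by simp [hu])
    | succ k ih =>
      by_cases hk : k < d
      · set δ : Fin d := ⟨k, hk⟩ with hδ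
        have step : Tilable {u k} (u (k+1)) := by
          apply surgery (δ := δ)
          have hmem : ((u k δ : ℕ) : ℝ) ∈
              (fun n : ℕ => (n:ℝ)) '' {L | ∃ b' ∈ ({u k} : Set (Fin d → ℕ)),
                (∀ j, j ≠ δ → b' j = u (k+1) j) ∧ L = b' δ} := by
            refine ⟨u k δ, ⟨u k, rfl, fun j hj => ?_, rfl⟩, rfl⟩
            have hjk : (j : ℕ) ≠ k := fun hc => hj (Fin.ext hc)
            simp only [hu]
            congr 1
            simp only [eq_iff_iff]
            omega
          have hdvd : u k δ ∣ u (k+1) δ := by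
            have h1 : u k δ = b δ := by simp [hu, hδ]
            have h2 : u (k+1) δ = t δ := by simp [hu, hδ]
            rw [h1, h2]; exact h δ
          obtain ⟨m, hm⟩ := hdvd
          have : ((u (k+1) δ : ℕ) : ℝ) = m • ((u k δ : ℕ) : ℝ) := by
            rw [hm]; push_cast; rw [nsmul_eq_mul]; ring
          rw [this]
          exact AddSubgroup.nsmul_mem _ (AddSubgroup.subset_closure hmem) m
        exact tilable_trans (fun q hq => by rw [Set.mem_singleton_iff] at hq; rw [hq]; exact ih) step
      · have : u (k+1) = u k := by
          funext i
          have hik : (i:ℕ) < k := by omega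
          simp only [hu]
          rw [if_pos (by omega), if_pos hik]
        rw [this]; exact ih
  have : t = u d := by
    funext i
    simp [hu, i.isLt]
  rw [this]
  exact key d

/-! ### Combs are tilable -/

lemma tilable_comb {A : Finset (Fin d → ℕ)} (δ : Fin d) :
    Tilable (↑A) (combN δ A) := by
  set c := combN δ A with hc
  set T : (Fin d → ℕ) → (Fin d → ℕ) := fun a j => if j = δ then a δ else c j with hT
  have h1 : ∀ a ∈ A, Tilable {a} (T a) := by
    intro a ha
    apply tilable_of_dvd
    intro j
    by_cases hj : j = δ
    · simp [hT, hj]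
    · simp only [hT, if_neg hj, hc, combN, if_neg hj]
      exact Finset.dvd_lcm ha
  have h2 : Tilable (T '' ↑A) c := by
    apply surgery (δ := δ)
    have hcδ : c δ = A.gcd (fun b => b δ) := by simp [hc, combN]
    rw [hcδ]
    apply nat_gcd_closure A (fun b => b δ)
    intro a ha
    apply AddSubgroup.subset_closure
    exact ⟨a δ, ⟨T a, ⟨a, ha, rfl⟩, fun j hj => by simp [hT, hj], by simp [hT]⟩, rfl⟩
  apply tilable_trans (Q := T '' ↑A) ?_ h2
  rintro q ⟨a, ha, rfl⟩
  exact tilable_mono (Set.singleton_subset_iff.mpr ha) (h1 a ha)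

lemma ext_tilable {Q : Set (Fin d → ℕ)} {δ : Fin d} {b : Fin d → ℕ}
    (h : b ∈ ExtN δ Q) : Tilable Q b := by
  obtain ⟨A, hA, hAQ, rfl⟩ := h
  exact tilable_mono hAQ (tilable_comb δ)

lemma lcm_pos {α : Type*} (A : Finset α) (f : α → ℕ) (h : ∀ a ∈ A, 0 < f a) :
    0 < A.lcm f := by
  classical
  induction A using Finset.induction with
  | empty => simp [Finset.lcm_empty]
  | @insert a s ha ih =>
    rw [Finset.lcm_insert]
    have h1 := h a (Finset.mem_insert_self a s)
    have h2 := ih (fun x hx => h x (Finset.mem_insert_of_mem hx))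
    have : lcm (f a) (s.lcm f) = Nat.lcm (f a) (s.lcm f) := rfl
    rw [this]
    exact Nat.pos_of_ne_zero (Nat.lcm_ne_zero (by omega) (by omega))

lemma ext_pos {Q : Set (Fin d → ℕ)} {δ : Fin d} {b : Fin d → ℕ}
    (h : b ∈ ExtN δ Q) (hQ : ∀ p ∈ Q, ∀ i, 0 < p i) : ∀ i, 0 < b i := by
  obtain ⟨A, hA, hAQ, rfl⟩ := h
  intro i
  by_cases hi : i = δ
  · simp only [combN, if_pos hi]
    apply Nat.pos_of_ne_zero
    intro hc
    rw [Finset.gcd_eq_zero_iff] at hc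
    obtain ⟨a, ha⟩ := hA
    have h1 := hc a ha
    have h2 := hQ a (hAQ ha) δ
    omega
  · simp only [combN, if_neg hi]
    exact lcm_pos A _ (fun a ha => hQ a (hAQ ha) i)

lemma extN_mono {δ : Fin d} {Q Q' : Set (Fin d → ℕ)} (h : Q ⊆ Q') :
    ExtN δ Q ⊆ ExtN δ Q' := by
  rintro b ⟨A, hA, hAQ, rfl⟩
  exact ⟨A, hA, hAQ.trans h, rfl⟩

lemma foldl_ext_mono : ∀ (L : List (Fin d)) {Q Q' : Set (Fin d → ℕ)}, Q ⊆ Q' →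
    L.foldl (fun S δ => ExtN δ S) Q ⊆ L.foldl (fun S δ => ExtN δ S) Q' := by
  intro L
  induction L with
  | nil => intro Q Q' h; exact h
  | cons δ L ih => intro Q Q' h; exact ih (extN_mono h)

lemma foldl_tilable_pos {P : Set (Fin d → ℕ)} : ∀ (L : List (Fin d)) (Q : Set (Fin d → ℕ)),
    (∀ b ∈ Q, (∀ i, 0 < b i) ∧ Tilable P b) →
    ∀ b ∈ L.foldl (fun S δ => ExtN δ S) Q, (∀ i, 0 < b i) ∧ Tilable P b := by
  intro L
  induction L with
  | nil => intro Q hQ; exact hQ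
  | cons δ L ih =>
    intro Q hQ b hb
    refine ih (ExtN δ Q) ?_ b hb
    intro b' hb'
    exact ⟨ext_pos hb' (fun p hp i => (hQ p hp).1 i),
      tilable_trans (fun q hq => (hQ q hq).2) (ext_tilable hb')⟩


/-! ### Number theory helpers -/

lemma pp_dvd_lcm2 {m n ℓ k : ℕ} (hℓ : ℓ.Prime) (hm : m ≠ 0) (hn : n ≠ 0)
    (h : ℓ^k ∣ Nat.lcm m n) : ℓ^k ∣ m ∨ ℓ^k ∣ n := by
  rw [Nat.Prime.pow_dvd_iff_le_factorization hℓ (Nat.lcm_ne_zero hm hn)] at h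
  rw [Nat.factorization_lcm hm hn] at h
  rw [Finsupp.sup_apply, le_sup_iff] at h
  rcases h with h | h
  · exact Or.inl ((Nat.Prime.pow_dvd_iff_le_factorization hℓ hm).mpr h)
  · exact Or.inr ((Nat.Prime.pow_dvd_iff_le_factorization hℓ hn).mpr h)

lemma pp_dvd_lcm {α : Type*} (A : Finset α) (f : α → ℕ) (hA : ∀ a ∈ A, f a ≠ 0)
    {ℓ k : ℕ} (hℓ : ℓ.Prime) (hk : 0 < k) (hdvd : ℓ^k ∣ A.lcm f) :
    ∃ a ∈ A, ℓ^k ∣ f a := by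
  classical
  induction A using Finset.induction with
  | empty =>
    exfalso
    simp only [Finset.lcm_empty] at hdvd
    have h1 := Nat.le_of_dvd one_pos hdvd
    have h2 : 1 < ℓ^k := Nat.one_lt_pow (by omega) hℓ.one_lt
    omega
  | @insert a s ha ih =>
    rw [Finset.lcm_insert] at hdvd
    have hl : lcm (f a) (s.lcm f) = Nat.lcm (f a) (s.lcm f) := rfl
    rw [hl] at hdvd
    have hs0 : s.lcm f ≠ 0 :=
      (lcm_pos s f (fun x hx => Nat.pos_of_ne_zero (hA x (Finset.mem_insert_of_mem hx)))).ne'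
    rcases pp_dvd_lcm2 hℓ (hA a (Finset.mem_insert_self a s)) hs0 hdvd with h | h
    · exact ⟨a, Finset.mem_insert_self a s, h⟩
    · obtain ⟨x, hx, hxd⟩ := ih (fun x hx => hA x (Finset.mem_insert_of_mem hx)) h
      exact ⟨x, Finset.mem_insert_of_mem hx, hxd⟩

lemma exists_pp_not_dvd {g t : ℕ} (hg : g ≠ 0) (ht : t ≠ 0) (h : ¬ g ∣ t) :
    ∃ ℓ k : ℕ, ℓ.Prime ∧ 0 < k ∧ ℓ^k ∣ g ∧ ¬ ℓ^k ∣ t := by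
  have h2 : ¬ g.factorization ≤ t.factorization :=
    fun hle => h ((Nat.factorization_le_iff_dvd hg ht).mp hle)
  rw [Finsupp.le_def] at h2
  push_neg at h2
  obtain ⟨ℓ, hℓ⟩ := h2
  have hmemsupp : ℓ ∈ g.factorization.support := Finsupp.mem_support_iff.mpr (by omega)
  have hp : ℓ.Prime := Nat.prime_of_mem_primeFactors
    (by rwa [Nat.support_factorization] at hmemsupp)
  refine ⟨ℓ, g.factorization ℓ, hp, by omega, Nat.ordProj_dvd g ℓ, ?_⟩
  rw [Nat.Prime.pow_dvd_iff_le_factorization hp ht]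
  omega

/-! ### The main combinatorial induction -/

lemma main_ind {t : Fin d → ℕ} (ht : ∀ i, 0 < t i) :
    ∀ (L : List (Fin d)), L.Nodup → ∀ (Q : Finset (Fin d → ℕ)), Q.Nonempty →
    (∀ p ∈ Q, ∀ i, 0 < p i) →
    (∀ p ∈ Q, ∀ i, i ∉ L → p i ∣ t i) →
    (∀ q : Fin d → ℕ, (∀ i ∈ L, IsPrimePow (q i)) →
      (∀ p ∈ Q, ∃ i ∈ L, q i ∣ p i) → ∃ i ∈ L, q i ∣ t i) →
    ∃ b ∈ L.foldl (fun S δ => ExtN δ S) (↑Q : Set (Fin d → ℕ)), ∀ i, b i ∣ t i := by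
  intro L
  induction L with
  | nil =>
    intro _ Q hQne hQpos hsettled _
    obtain ⟨p, hp⟩ := hQne
    exact ⟨p, by simpa using hp, fun i => hsettled p hp i (by simp)⟩
  | cons δ L ih =>
    intro hnd Q hQne hQpos hsettled H
    have hδL : δ ∉ L := (List.nodup_cons.mp hnd).1
    set Q₁ : Finset (Fin d → ℕ) :=
      (Q.powerset.filter (fun A => A.Nonempty ∧ (combN δ A) δ ∣ t δ)).image (combN δ) with hQ₁
    have hmem : ∀ b ∈ Q₁, ∃ A : Finset (Fin d → ℕ),
        A ⊆ Q ∧ A.Nonempty ∧ (combN δ A) δ ∣ t δ ∧ b = combN δ A := by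
      intro b hb
      simp only [hQ₁, Finset.mem_image, Finset.mem_filter, Finset.mem_powerset] at hb
      obtain ⟨A, ⟨hAQ, hAne, hdvd⟩, rfl⟩ := hb
      exact ⟨A, hAQ, hAne, hdvd, rfl⟩
    have hsub : (↑Q₁ : Set (Fin d → ℕ)) ⊆ ExtN δ (↑Q : Set (Fin d → ℕ)) := by
      intro b hb
      obtain ⟨A, hAQ, hAne, _, rfl⟩ := hmem b hb
      exact ⟨A, hAne, Finset.coe_subset.mpr hAQ, rfl⟩
    have hQ₁pos : ∀ b ∈ Q₁, ∀ i, 0 < b i := by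
      intro b hb
      obtain ⟨A, hAQ, hAne, _, rfl⟩ := hmem b hb
      exact ext_pos (Q := (↑Q : Set (Fin d → ℕ)))
        ⟨A, hAne, Finset.coe_subset.mpr hAQ, rfl⟩ (fun p hp i => hQpos p hp i)
    have hgcdQ : Q.gcd (fun b => b δ) ∣ t δ := by
      by_contra hgt
      have hg0 : Q.gcd (fun b => b δ) ≠ 0 := by
        intro hc
        rw [Finset.gcd_eq_zero_iff] at hc
        obtain ⟨p, hp⟩ := hQne
        have h1 := hQpos p hp δ
        have h2 : p δ = 0 := hc p hp
        exact absurd (h2 ▸ h1) (lt_irrefl 0)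
      obtain ⟨ℓ, k, hℓ, hk, hdg, hndt⟩ := exists_pp_not_dvd hg0 (ht δ).ne' hgt
      obtain ⟨ρ, hρt, hρp⟩ := Nat.exists_infinite_primes ((Finset.univ.sup t) + 1)
      have hρbig : ∀ i, t i < ρ := fun i =>
        lt_of_lt_of_le (Nat.lt_succ_of_le (Finset.le_sup (Finset.mem_univ i))) hρt
      set q : Fin d → ℕ := fun i => if i = δ then ℓ^k else ρ with hq
      have hqδ : q δ = ℓ^k := by simp [hq]
      have hqne : ∀ i, i ≠ δ → q i = ρ := fun i hi => by simp [hq, hi]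
      have hcon := H q ?_ ?_
      · obtain ⟨i, hiL, hidvd⟩ := hcon
        rcases List.mem_cons.mp hiL with rfl | hiL'
        · rw [hqδ] at hidvd; exact hndt hidvd
        · have hiδ : i ≠ δ := fun hc => hδL (hc ▸ hiL')
          rw [hqne i hiδ] at hidvd
          exact absurd (Nat.le_of_dvd (ht i) hidvd) (not_le.mpr (hρbig i))
      · intro i _
        by_cases hi : i = δ
        · subst hi; rw [hqδ]
          exact ⟨ℓ, k, hℓ.prime, hk, rfl⟩
        · rw [hqne i hi]
          exact hρp.isPrimePow
      · intro p hp
        refine ⟨δ, List.mem_cons_self, ?_⟩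
        rw [hqδ]
        exact hdg.trans (Finset.gcd_dvd hp)
    have hQ₁ne : Q₁.Nonempty := by
      refine ⟨combN δ Q, Finset.mem_image_of_mem _ ?_⟩
      rw [Finset.mem_filter, Finset.mem_powerset]
      refine ⟨Finset.Subset.refl Q, hQne, ?_⟩
      simpa only [combN, if_pos rfl, if_true] using hgcdQ
    have hQ₁settled : ∀ b ∈ Q₁, ∀ i, i ∉ L → b i ∣ t i := by
      intro b hb i hiL
      obtain ⟨A, hAQ, hAne, hdvd, rfl⟩ := hmem b hb
      by_cases hi : i = δ
      · subst hi; exact hdvd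
      · simp only [combN, if_neg hi]
        apply Finset.lcm_dvd
        intro p hp
        refine hsettled p (hAQ hp) i ?_
        rw [List.mem_cons]
        push_neg
        exact ⟨hi, hiL⟩
    have HQ₁ : ∀ q : Fin d → ℕ, (∀ i ∈ L, IsPrimePow (q i)) →
        (∀ b ∈ Q₁, ∃ i ∈ L, q i ∣ b i) → ∃ i ∈ L, q i ∣ t i := by
      intro q' hpp hblock
      by_contra hno
      push_neg at hno
      set B : Finset (Fin d → ℕ) := Q.filter (fun p => ∀ i ∈ L, ¬ q' i ∣ p i) with hB
      rcases B.eq_empty_or_nonempty with hBe | hBne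
      · obtain ⟨ρ, hρt, hρp⟩ := Nat.exists_infinite_primes (t δ + 1)
        set q'' : Fin d → ℕ := Function.update q' δ ρ with hq''
        have hcon := H q'' ?_ ?_
        · obtain ⟨i, hiL, hidvd⟩ := hcon
          rcases List.mem_cons.mp hiL with rfl | hiL'
          · rw [hq'', Function.update_self] at hidvd
            exact absurd (Nat.le_of_dvd (ht i) hidvd)
              (not_le.mpr (Nat.lt_of_lt_of_le (Nat.lt_succ_self _) hρt))
          · have hiδ : i ≠ δ := fun hc => hδL (hc ▸ hiL')
            rw [hq'', Function.update_of_ne hiδ] at hidvd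
            exact hno i hiL' hidvd
        · intro i hiL
          rcases List.mem_cons.mp hiL with rfl | hiL'
          · rw [hq'', Function.update_self]; exact hρp.isPrimePow
          · have hiδ : i ≠ δ := fun hc => hδL (hc ▸ hiL')
            rw [hq'', Function.update_of_ne hiδ]; exact hpp i hiL'
        · intro p hp
          have hpB : p ∉ B := by rw [hBe]; exact Finset.notMem_empty p
          rw [hB, Finset.mem_filter] at hpB
          push_neg at hpB
          obtain ⟨i, hiL, hidvd⟩ := hpB hp
          have hiδ : i ≠ δ := fun hc => hδL (hc ▸ hiL)
          exact ⟨i, List.mem_cons_of_mem δ hiL, by rw [hq'', Function.update_of_ne hiδ]; exact hidvd⟩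
      · set g := B.gcd (fun p => p δ) with hg
        by_cases hgd : g ∣ t δ
        · have hbstar : combN δ B ∈ Q₁ := by
            refine Finset.mem_image_of_mem _ ?_
            rw [Finset.mem_filter, Finset.mem_powerset]
            exact ⟨Finset.filter_subset _ _, hBne, by simpa only [combN, if_pos rfl, if_true] using hgd⟩
          obtain ⟨i, hiL, hidvd⟩ := hblock _ hbstar
          have hiδ : i ≠ δ := fun hc => hδL (hc ▸ hiL)
          simp only [combN, if_neg hiδ] at hidvd
          obtain ⟨p, k, hp, hk, hpk⟩ := hpp i hiL
          rw [← hpk] at hidvd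
          obtain ⟨a, haB, hdvda⟩ := pp_dvd_lcm B _
            (fun a ha => (hQpos a (Finset.filter_subset _ _ ha) i).ne')
            (Nat.prime_iff.mpr hp) hk hidvd
          have hcontra := (Finset.mem_filter.mp haB).2 i hiL
          rw [← hpk] at hcontra
          exact hcontra hdvda
        · have hg0 : g ≠ 0 := by
            intro hc
            rw [hg, Finset.gcd_eq_zero_iff] at hc
            obtain ⟨p, hp⟩ := hBne
            have h1 := hQpos p (Finset.filter_subset _ _ hp) δ
            have h2 : p δ = 0 := hc p hp
            exact absurd (h2 ▸ h1) (lt_irrefl 0)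
          obtain ⟨ℓ, k, hℓ, hk, hdg, hndt⟩ := exists_pp_not_dvd hg0 (ht δ).ne' hgd
          set q'' : Fin d → ℕ := Function.update q' δ (ℓ^k) with hq''
          have hcon := H q'' ?_ ?_
          · obtain ⟨i, hiL, hidvd⟩ := hcon
            rcases List.mem_cons.mp hiL with rfl | hiL'
            · rw [hq'', Function.update_self] at hidvd
              exact hndt hidvd
            · have hiδ : i ≠ δ := fun hc => hδL (hc ▸ hiL')
              rw [hq'', Function.update_of_ne hiδ] at hidvd
              exact hno i hiL' hidvd
          · intro i hiL
            rcases List.mem_cons.mp hiL with rfl | hiL'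
            · rw [hq'', Function.update_self]; exact ⟨ℓ, k, hℓ.prime, hk, rfl⟩
            · have hiδ : i ≠ δ := fun hc => hδL (hc ▸ hiL')
              rw [hq'', Function.update_of_ne hiδ]; exact hpp i hiL'
          · intro p hp
            by_cases hpB : p ∈ B
            · refine ⟨δ, List.mem_cons_self, ?_⟩
              rw [hq'', Function.update_self]
              exact hdg.trans (hg ▸ Finset.gcd_dvd hpB)
            · rw [hB, Finset.mem_filter] at hpB
              push_neg at hpB
              obtain ⟨i, hiL, hidvd⟩ := hpB hp
              have hiδ : i ≠ δ := fun hc => hδL (hc ▸ hiL)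
              exact ⟨i, List.mem_cons_of_mem δ hiL,
                by rw [hq'', Function.update_of_ne hiδ]; exact hidvd⟩
    obtain ⟨b, hbmem, hbdvd⟩ := ih (List.nodup_cons.mp hnd).2 Q₁ hQ₁ne hQ₁pos hQ₁settled HQ₁
    refine ⟨b, ?_, hbdvd⟩
    have hmono := foldl_ext_mono L hsub
    rw [List.foldl_cons]
    exact hmono hbmem

/-! ### The analytic lemma -/

section Analytic
open MeasureTheory

/-- Indicator of `[u, u+L)` times the character `x ↦ exp(2πix/q)`. -/
def cf (L : ℕ) (u : ℝ) (q : ℕ) : ℝ → ℂ :=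
  Set.indicator (Set.Ico u (u + (L:ℝ)))
    (fun x => Complex.exp (2 * Real.pi * Complex.I / (q:ℂ) * (x:ℂ)))

lemma brickInd_mul_prod (b : Fin d → ℕ) (w : Fin d → ℝ) (q : Fin d → ℕ) (y : Fin d → ℝ) :
    (brickInd b w y : ℂ) * ∏ i, Complex.exp (2 * Real.pi * Complex.I / (q i : ℂ) * (y i : ℂ))
      = ∏ i, cf (b i) (w i) (q i) (y i) := by
  unfold brickInd cf
  by_cases h : ∀ i, w i ≤ y i ∧ y i < w i + (b i : ℝ)
  · rw [if_pos h]
    push_cast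
    rw [one_mul]
    refine Finset.prod_congr rfl (fun i _ => ?_)
    rw [Set.indicator_of_mem (Set.mem_Ico.mpr ⟨(h i).1, (h i).2⟩)]
  · rw [if_neg h]
    push_cast
    rw [zero_mul]
    push_neg at h
    obtain ⟨i, hi⟩ := h
    symm
    apply Finset.prod_eq_zero (Finset.mem_univ i)
    apply Set.indicator_of_notMem
    rw [Set.mem_Ico]
    intro hc
    exact absurd hc.2 (not_lt.mpr (hi hc.1))

lemma cf_continuous_aux (q : ℕ) :
    Continuous (fun x : ℝ => Complex.exp (2 * Real.pi * Complex.I / (q:ℂ) * (x:ℂ))) :=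
  Complex.continuous_exp.comp (continuous_const.mul Complex.continuous_ofReal)

lemma integrable_cf (L : ℕ) (u : ℝ) (q : ℕ) : Integrable (cf L u q) := by
  rw [cf, integrable_indicator_iff measurableSet_Ico]
  exact ((cf_continuous_aux q).integrableOn_Icc).mono_set Set.Ico_subset_Icc_self

lemma c_ne_zero {q : ℕ} (hq : 0 < q) : (2 * Real.pi * Complex.I / (q:ℂ)) ≠ 0 := by
  apply div_ne_zero
  · exact Complex.two_pi_I_ne_zero
  · exact_mod_cast Nat.cast_ne_zero.mpr hq.ne'

lemma integral_cf (L : ℕ) (u : ℝ) {q : ℕ} (hq : 0 < q) :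
    ∫ x : ℝ, cf L u q x =
      Complex.exp (2 * Real.pi * Complex.I / (q:ℂ) * (u:ℂ)) *
        (Complex.exp (2 * Real.pi * Complex.I / (q:ℂ) * (L:ℂ)) - 1) /
          (2 * Real.pi * Complex.I / (q:ℂ)) := by
  set c : ℂ := 2 * Real.pi * Complex.I / (q:ℂ) with hc
  have hc0 : c ≠ 0 := c_ne_zero hq
  have hle : u ≤ u + (L:ℝ) := by
    have := Nat.cast_nonneg (α := ℝ) L
    linarith
  rw [cf, integral_indicator measurableSet_Ico, ← MeasureTheory.integral_Icc_eq_integral_Ico,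
    MeasureTheory.integral_Icc_eq_integral_Ioc,
    ← intervalIntegral.integral_of_le hle, integral_exp_mul_complex hc0]
  have : c * ((u:ℂ) + (L:ℂ)) = c * u + c * L := by ring
  push_cast
  rw [this, Complex.exp_add]
  field_simp

lemma analytic {t : Fin d → ℕ} {m : ℕ} {p : Fin m → Fin d → ℕ} {w : Fin m → Fin d → ℝ}
    {γ : Fin m → ℤ}
    (hid : ∀ y, brickInd t (fun _ => 0) y = ∑ j, γ j * brickInd (p j) (w j) y)
    (q : Fin d → ℕ) (hq : ∀ i, 0 < q i)
    (hblock : ∀ j, ∃ i, q i ∣ p j i) (ht : ∀ i, 0 < t i) :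
    ∃ i, q i ∣ t i := by
  classical
  have key : ∀ y : Fin d → ℝ, (∏ i, cf (t i) (0:ℝ) (q i) (y i)) =
      ∑ j, (γ j : ℂ) * ∏ i, cf (p j i) (w j i) (q i) (y i) := by
    intro y
    rw [← brickInd_mul_prod t (fun _ => (0:ℝ)) q y]
    have hcast : ((brickInd t (fun _ => 0) y : ℤ) : ℂ) =
        ∑ j, (γ j : ℂ) * ((brickInd (p j) (w j) y : ℤ) : ℂ) := by
      rw [hid y]
      push_cast
      rfl
    rw [hcast, Finset.sum_mul]
    refine Finset.sum_congr rfl (fun j _ => ?_)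
    rw [mul_assoc, brickInd_mul_prod]
  have hInt : ∀ (b : Fin d → ℕ) (v : Fin d → ℝ),
      Integrable (fun y : Fin d → ℝ => ∏ i, cf (b i) (v i) (q i) (y i)) := by
    intro b v
    exact Integrable.fintype_prod_dep (fun i => integrable_cf _ _ _)
  have hI : ∫ y : Fin d → ℝ, ∏ i, cf (t i) (0:ℝ) (q i) (y i) =
      ∑ j, (γ j : ℂ) * ∫ y : Fin d → ℝ, ∏ i, cf (p j i) (w j i) (q i) (y i) := by
    rw [show (fun y : Fin d → ℝ => ∏ i, cf (t i) (0:ℝ) (q i) (y i)) =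
        fun y => ∑ j, (γ j:ℂ) * ∏ i, cf (p j i) (w j i) (q i) (y i) from funext key]
    rw [integral_finset_sum Finset.univ (fun j _ => (hInt (p j) (w j)).const_mul _)]
    refine Finset.sum_congr rfl (fun j _ => ?_)
    rw [MeasureTheory.integral_const_mul]
  have hRHS : ∀ j, ∫ y : Fin d → ℝ, ∏ i, cf (p j i) (w j i) (q i) (y i) = 0 := by
    intro j
    rw [integral_fintype_prod_volume_eq_prod (ι := Fin d) (fun i x => cf (p j i) (w j i) (q i) x)]
    obtain ⟨i, hi⟩ := hblock j
    apply Finset.prod_eq_zero (Finset.mem_univ i)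
    rw [integral_cf _ _ (hq i)]
    obtain ⟨n, hn⟩ := hi
    have hexp : Complex.exp (2 * Real.pi * Complex.I / (q i : ℂ) * ((p j i : ℕ) : ℂ)) = 1 := by
      rw [hn]
      push_cast
      have harg : (2 * Real.pi * Complex.I / (q i : ℂ) * ((q i : ℂ) * (n : ℂ)))
          = (n : ℤ) * (2 * Real.pi * Complex.I) := by
        have hqne : ((q i : ℕ) : ℂ) ≠ 0 := Nat.cast_ne_zero.mpr (hq i).ne'
        rw [div_mul_eq_mul_div, div_eq_iff hqne]
        push_cast
        ring
      rw [harg]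
      exact Complex.exp_int_mul_two_pi_mul_I n
    rw [hexp, sub_self, mul_zero, zero_div]
  have hLHS : ∏ i, ∫ x : ℝ, cf (t i) (0:ℝ) (q i) x = 0 := by
    rw [← integral_fintype_prod_volume_eq_prod (ι := Fin d) (fun i x => cf (t i) (0:ℝ) (q i) x)]
    rw [hI]
    simp only [hRHS, mul_zero, Finset.sum_const_zero]
  obtain ⟨i, -, hzero⟩ := Finset.prod_eq_zero_iff.mp hLHS
  refine ⟨i, ?_⟩
  rw [integral_cf _ _ (hq i)] at hzero
  have hc0 : (2 * Real.pi * Complex.I / (q i : ℂ)) ≠ 0 := c_ne_zero (hq i)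
  have hexp1 : Complex.exp (2 * Real.pi * Complex.I / (q i : ℂ) * ((0:ℝ):ℂ)) = 1 := by
    norm_num
  rw [hexp1, one_mul, div_eq_zero_iff, sub_eq_zero] at hzero
  rcases hzero with hzero | hzero
  · rw [Complex.exp_eq_one_iff] at hzero
    obtain ⟨n, hn⟩ := hzero
    have hqne : ((q i : ℕ) : ℂ) ≠ 0 := Nat.cast_ne_zero.mpr (hq i).ne'
    have htn : ((t i : ℕ) : ℂ) = (n : ℂ) * ((q i : ℕ) : ℂ) := by
      have h2 : (2 * Real.pi * Complex.I) ≠ 0 := Complex.two_pi_I_ne_zero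
      field_simp at hn
      have h3 : (2 * Real.pi * Complex.I) * ((t i : ℕ) : ℂ) =
          (2 * Real.pi * Complex.I) * ((n : ℂ) * ((q i : ℕ) : ℂ)) := by
        linear_combination (2 * Real.pi * Complex.I) * hn
      exact mul_left_cancel₀ h2 h3
    have htz : (t i : ℤ) = n * (q i : ℤ) := by exact_mod_cast htn
    have : ((q i : ℕ) : ℤ) ∣ ((t i : ℕ) : ℤ) := ⟨n, by rw [htz]; ring⟩
    exact_mod_cast this
  · exact absurd hzero hc0
end Analytic

end BrickAux

open BrickAux in
/-- Equality Theorem: For every dimension `d ≥ 1` and every nonempty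
finite set `P` of `d`-dimensional bricks, `M(P)` equals the set of `⪯`-minimal elements
of `Ext_{1..d}(P)`.  Equivalently, a brick `t` is tilable by `P` if and only if there
exists `b ∈ Ext_{1..d}(P)` with `b ⪯ t`. -/
theorem statement2 {d : ℕ} (hd : 1 ≤ d) (P : Finset (Fin d → ℕ))
    (hne : P.Nonempty) (hpos : ∀ b ∈ P, ∀ i, 0 < b i) :
    MSet (↑P : Set (Fin d → ℕ)) = MinOf (ExtAllN (↑P : Set (Fin d → ℕ))) ∧
    ∀ t : Fin d → ℕ, (∀ i, 0 < t i) →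
      (Tilable (↑P : Set (Fin d → ℕ)) t ↔
        ∃ b ∈ ExtAllN (↑P : Set (Fin d → ℕ)), BrickLE b t) := by
  classical
  have hbase : ∀ b ∈ (↑P : Set (Fin d → ℕ)), (∀ i, 0 < b i) ∧ Tilable (↑P : Set (Fin d → ℕ)) b :=
    fun b hb => ⟨hpos b hb, tilable_self hb⟩
  have hE : ∀ b ∈ ExtAllN (↑P : Set (Fin d → ℕ)),
      (∀ i, 0 < b i) ∧ Tilable (↑P : Set (Fin d → ℕ)) b :=
    fun b hb => foldl_tilable_pos (List.finRange d) _ hbase b hb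
  have hiff : ∀ t : Fin d → ℕ, (∀ i, 0 < t i) →
      (Tilable (↑P : Set (Fin d → ℕ)) t ↔
        ∃ b ∈ ExtAllN (↑P : Set (Fin d → ℕ)), BrickLE b t) := by
    intro t ht
    constructor
    · rintro ⟨m, p, w, γ, hp, hid⟩
      have hm : m ≠ 0 := by
        intro h0
        subst h0
        have h1 := hid (fun _ => 0)
        have h2 : brickInd t (fun _ => 0) (fun _ => 0) = 1 := by
          refine if_pos (fun i => ⟨le_refl _, ?_⟩)
          have := ht i
          simp only [zero_add]
          exact_mod_cast this
        rw [h2] at h1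
        simp at h1
      haveI : Nonempty (Fin m) := ⟨⟨0, Nat.pos_of_ne_zero hm⟩⟩
      set P' : Finset (Fin d → ℕ) := Finset.image p Finset.univ with hP'
      have hP'ne : P'.Nonempty := Finset.image_nonempty.mpr Finset.univ_nonempty
      have hP'pos : ∀ b ∈ P', ∀ i, 0 < b i := by
        intro b hb
        rw [hP', Finset.mem_image] at hb
        obtain ⟨j, -, rfl⟩ := hb
        exact hpos _ (hp j)
      have hsettled : ∀ b ∈ P', ∀ i, i ∉ List.finRange d → b i ∣ t i := by
        intro b _ i hi
        exact absurd (List.mem_finRange i) hi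
      have hH : ∀ q : Fin d → ℕ, (∀ i ∈ List.finRange d, IsPrimePow (q i)) →
          (∀ b ∈ P', ∃ i ∈ List.finRange d, q i ∣ b i) →
          ∃ i ∈ List.finRange d, q i ∣ t i := by
        intro q hppq hblockq
        have hqpos : ∀ i, 0 < q i := fun i => (hppq i (List.mem_finRange i)).pos
        have hbl : ∀ j, ∃ i, q i ∣ p j i := by
          intro j
          obtain ⟨i, -, hi⟩ := hblockq (p j)
            (Finset.mem_image_of_mem p (Finset.mem_univ j))
          exact ⟨i, hi⟩
        obtain ⟨i, hi⟩ := analytic hid q hqpos hbl ht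
        exact ⟨i, List.mem_finRange i, hi⟩
      obtain ⟨b, hb, hbdvd⟩ := main_ind ht (List.finRange d) (List.nodup_finRange d)
        P' hP'ne hP'pos hsettled hH
      have hsub : (↑P' : Set (Fin d → ℕ)) ⊆ (↑P : Set (Fin d → ℕ)) := by
        intro x hx
        simp only [hP', Finset.coe_image, Set.mem_image] at hx
        obtain ⟨j, -, rfl⟩ := hx
        exact hp j
      exact ⟨b, foldl_ext_mono (List.finRange d) hsub hb, hbdvd⟩
    · rintro ⟨b, hbE, hble⟩
      have hbt := (hE b hbE).2
      refine tilable_trans (Q := {b}) ?_ (tilable_of_dvd hble)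
      rintro q hq
      rw [Set.mem_singleton_iff] at hq
      rw [hq]
      exact hbt
  refine ⟨?_, hiff⟩
  ext x
  constructor
  · rintro ⟨hxT, hmin⟩
    obtain ⟨b, hbE, hble⟩ := (hiff x hxT.1).mp hxT.2
    have hbx : b = x := hmin b ⟨(hE b hbE).1, (hE b hbE).2⟩ hble
    subst hbx
    exact ⟨hbE, fun s hs hsb => hmin s ⟨(hE s hs).1, (hE s hs).2⟩ hsb⟩
  · rintro ⟨hxE, hmin⟩
    have hxT : x ∈ {t | (∀ i, 0 < t i) ∧ Tilable (↑P : Set (Fin d → ℕ)) t} :=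
      ⟨(hE x hxE).1, (hE x hxE).2⟩
    refine ⟨hxT, ?_⟩
    rintro s ⟨hspos, hstil⟩ hsx
    obtain ⟨c, hcE, hcs⟩ := (hiff s hspos).mp hstil
    have hcx : BrickLE c x := fun i => (hcs i).trans (hsx i)
    have hcx' : c = x := hmin c hcE hcx
    funext i
    exact Nat.dvd_antisymm (hsx i) (hcx' ▸ hcs i)
end
end

section
/- (Equal-Alphabet Lemma, Fact F2.) Every minimal brick of Λ[r,d] is balanced: all of its d coordinates have the same alphabet. -/
open scoped Classical

noncomputable section

/-- The free distributive lattice `L[r]` on `r` generators, realized as the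
monotone Boolean functions of `r` Boolean variables other than the two constants. -/
structure FDL (r : ℕ) where
  f : (Fin r → Bool) → Bool
  mono : ∀ ⦃x y : Fin r → Bool⦄, (∀ i, x i ≤ y i) → f x ≤ f y
  map_bot : f (fun _ => false) = false
  map_top : f (fun _ => true) = true

namespace FDL

theorem ext' {r : ℕ} {a b : FDL r} (h : a.f = b.f) : a = b := by
  cases a; cases b; cases h; rfl

instance {r : ℕ} : PartialOrder (FDL r) where
  le a b := ∀ x, a.f x ≤ b.f x
  le_refl a x := le_refl _
  le_trans a b c h1 h2 x := le_trans (h1 x) (h2 x)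
  le_antisymm a b h1 h2 := ext' (funext fun x => le_antisymm (h1 x) (h2 x))

/-- The `n`-th generator of `L[r]`: the projection `x ↦ x n`. -/
def gen {r : ℕ} (n : Fin r) : FDL r where
  f x := x n
  mono := fun _ _ h => h n
  map_bot := rfl
  map_top := rfl

/-- Meet (pointwise AND) in `L[r]`. -/
def meet {r : ℕ} (a b : FDL r) : FDL r where
  f x := a.f x && b.f x
  mono := fun x y h => by
    show (a.f x && b.f x) ≤ (a.f y && b.f y)
    have ha := a.mono h
    have hb := b.mono h
    revert ha hb
    cases a.f x <;> cases a.f y <;> cases b.f x <;> cases b.f y <;> decide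
  map_bot := by
    show (a.f (fun _ => false) && b.f (fun _ => false)) = false
    rw [a.map_bot, b.map_bot]; rfl
  map_top := by
    show (a.f (fun _ => true) && b.f (fun _ => true)) = true
    rw [a.map_top, b.map_top]; rfl

/-- Join (pointwise OR) in `L[r]`. -/
def join {r : ℕ} (a b : FDL r) : FDL r where
  f x := a.f x || b.f x
  mono := fun x y h => by
    show (a.f x || b.f x) ≤ (a.f y || b.f y)
    have ha := a.mono h
    have hb := b.mono h
    revert ha hb
    cases a.f x <;> cases a.f y <;> cases b.f x <;> cases b.f y <;> decide
  map_bot := by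
    show (a.f (fun _ => false) || b.f (fun _ => false)) = false
    rw [a.map_bot, b.map_bot]; rfl
  map_top := by
    show (a.f (fun _ => true) || b.f (fun _ => true)) = true
    rw [a.map_top, b.map_top]; rfl

end FDL

/-- The `n`-th cube `W n` in `Λ[r,d]`: every coordinate is the `n`-th generator. -/
def cubeL (r d : ℕ) (n : Fin r) : Fin d → FDL r := fun _ => FDL.gen n

/-- `comb_δ(A)` in `Λ[r,d]`: the meet of the `δ`-th coordinates of the members of the
nonempty finite set `A`, and the join of the `j`-th coordinates for `j ≠ δ`. -/
def combL {r d : ℕ} (δ : Fin d) (A : Finset (Fin d → FDL r)) (hA : A.Nonempty) :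
    Fin d → FDL r := fun j =>
  if j = δ then
    { f := fun x => A.inf fun b => (b δ).f x
      mono := fun _ _ h => Finset.inf_mono_fun fun b _ => (b δ).mono h
      map_bot := (Finset.inf_congr rfl fun b _ => (b δ).map_bot).trans
        (Finset.inf_const hA false)
      map_top := (Finset.inf_congr rfl fun b _ => (b δ).map_top).trans
        (Finset.inf_const hA true) }
  else
    { f := fun x => A.sup fun b => (b j).f x
      mono := fun _ _ h => Finset.sup_mono_fun fun b _ => (b j).mono h
      map_bot := (Finset.sup_congr rfl fun b _ => (b j).map_bot).trans
        (Finset.sup_const hA false)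
      map_top := (Finset.sup_congr rfl fun b _ => (b j).map_top).trans
        (Finset.sup_const hA true) }

/-- `Ext_δ(Q) = { comb_δ(A) : A a nonempty finite subset of Q }` in `Λ[r,d]`. -/
def ExtL {r d : ℕ} (δ : Fin d) (Q : Set (Fin d → FDL r)) : Set (Fin d → FDL r) :=
  {b | ∃ (A : Finset (Fin d → FDL r)) (hA : A.Nonempty), ↑A ⊆ Q ∧ b = combL δ A hA}

/-- `Ext_{1..d} = Ext_d ∘ ⋯ ∘ Ext_1`. -/
def ExtAllL {r d : ℕ} (Q : Set (Fin d → FDL r)) : Set (Fin d → FDL r) :=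
  (List.finRange d).foldl (fun S δ => ExtL δ S) Q

/-- A brick of `Λ[r,d]` is good if it belongs to `Ext_{1..d}({W 1, …, W r})`. -/
def GoodL {r d : ℕ} (b : Fin d → FDL r) : Prop :=
  b ∈ ExtAllL (Set.range (cubeL r d))

/-- A brick of `Λ[r,d]` is minimal if it is good and no good brick is strictly
below it in the pointwise order. -/
def MinimalL {r d : ℕ} (b : Fin d → FDL r) : Prop :=
  GoodL b ∧ ∀ c : Fin d → FDL r, GoodL c → c ≤ b → c = b

/-- `a ∈ L[r]` depends on the variable `n`. -/
def DependsL {r : ℕ} (a : FDL r) (n : Fin r) : Prop :=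
  ∃ x : Fin r → Bool, a.f x ≠ a.f (Function.update x n (!x n))

/-- The alphabet of `a ∈ L[r]`: the set of variables on which it depends. -/
def alphabetL {r : ℕ} (a : FDL r) : Finset (Fin r) :=
  Finset.univ.filter fun n => DependsL a n

/-- The alphabet of a brick: the union of the alphabets of its coordinates. -/
def brickAlphabetL {r d : ℕ} (b : Fin d → FDL r) : Finset (Fin r) :=
  Finset.univ.filter fun n => ∃ i, DependsL (b i) n

/-- The envelope of a brick `b`, as a Boolean function: the join of the generators
indexed by the alphabet of `b`. -/
def envFunL {r d : ℕ} (b : Fin d → FDL r) : (Fin r → Bool) → Bool :=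
  fun x => (brickAlphabetL b).sup x

/-- A brick is balanced if all its coordinates have the same alphabet. -/
def BalancedL {r d : ℕ} (b : Fin d → FDL r) : Prop :=
  ∀ i j : Fin d, alphabetL (b i) = alphabetL (b j)


/-! ### Auxiliary development for Statement 7 -/

section Statement7Aux

variable {r d : ℕ}

/-- Extensionality for bricks. -/
theorem brick_ext {a b : Fin d → FDL r} (h : ∀ k x, (a k).f x = (b k).f x) : a = b :=
  funext fun k => FDL.ext' (funext fun x => h k x)

theorem bool_inf_eq_and (a b : Bool) : a ⊓ b = (a && b) :=
  congrFun (congrFun Bool.inf_eq_band a) b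

theorem bool_sup_eq_or (a b : Bool) : a ⊔ b = (a || b) :=
  congrFun (congrFun Bool.sup_eq_bor a) b

theorem bool_inf_true (a b : Bool) : a ⊓ b = true ↔ a = true ∧ b = true := by
  rw [bool_inf_eq_and]; cases a <;> cases b <;> simp

theorem bool_inf_false (a b : Bool) : a ⊓ b = false ↔ a = false ∨ b = false := by
  rw [bool_inf_eq_and]; cases a <;> cases b <;> simp

theorem bool_sup_true (a b : Bool) : a ⊔ b = true ↔ a = true ∨ b = true := by
  rw [bool_sup_eq_or]; cases a <;> cases b <;> simp

theorem bool_sup_false (a b : Bool) : a ⊔ b = false ↔ a = false ∧ b = false := by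
  rw [bool_sup_eq_or]; cases a <;> cases b <;> simp

theorem bool_top_eq : (⊤ : Bool) = true := rfl
theorem bool_bot_eq : (⊥ : Bool) = false := rfl

theorem binf_true {α : Type*} (A : Finset α) (f : α → Bool) :
    A.inf f = true ↔ ∀ a ∈ A, f a = true := by
  classical
  induction A using Finset.induction_on with
  | empty => simp [bool_top_eq]
  | insert _ _ h ih =>
      rw [Finset.inf_insert, bool_inf_true, ih]
      simp_all

theorem binf_false {α : Type*} (A : Finset α) (f : α → Bool) :
    A.inf f = false ↔ ∃ a ∈ A, f a = false := by
  constructor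
  · intro h
    by_contra hc
    push_neg at hc
    have ht : A.inf f = true := (binf_true A f).mpr (fun a ha => by
      have hfa := hc a ha
      cases hv : f a with
      | false => exact absurd hv hfa
      | true => rfl)
    rw [ht] at h
    cases h
  · rintro ⟨a, ha, hfa⟩
    have h1 : A.inf f ≤ f a := Finset.inf_le ha
    rw [hfa] at h1
    exact le_antisymm h1 (Bool.false_le _)

theorem bsup_false {α : Type*} (A : Finset α) (f : α → Bool) :
    A.sup f = false ↔ ∀ a ∈ A, f a = false := by
  classical
  induction A using Finset.induction_on with
  | empty => simp [bool_bot_eq]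
  | insert _ _ h ih =>
      rw [Finset.sup_insert, bool_sup_false, ih]
      simp_all

theorem bsup_true {α : Type*} (A : Finset α) (f : α → Bool) :
    A.sup f = true ↔ ∃ a ∈ A, f a = true := by
  constructor
  · intro h
    by_contra hc
    push_neg at hc
    have ht : A.sup f = false := (bsup_false A f).mpr (fun a ha => by
      have hfa := hc a ha
      cases hv : f a with
      | true => exact absurd hv hfa
      | false => rfl)
    rw [ht] at h
    cases h
  · rintro ⟨a, ha, hfa⟩
    have h1 : f a ≤ A.sup f := Finset.le_sup ha
    rw [hfa] at h1
    exact le_antisymm (Bool.le_true _) h1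

/-- The value of the `δ`-th coordinate of a comb. -/
theorem combL_f_self (δ : Fin d) (A : Finset (Fin d → FDL r)) (hA : A.Nonempty)
    (x : Fin r → Bool) : ((combL δ A hA) δ).f x = A.inf fun b => (b δ).f x := by
  simp [combL]

/-- The value of the other coordinates of a comb. -/
theorem combL_f_ne {k δ : Fin d} (h : k ≠ δ) (A : Finset (Fin d → FDL r)) (hA : A.Nonempty)
    (x : Fin r → Bool) : ((combL δ A hA) k).f x = A.sup fun b => (b k).f x := by
  simp [combL, h]

/-- Binary comb merge. -/
def mergeL (δ : Fin d) (u v : Fin d → FDL r) : Fin d → FDL r :=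
  combL δ {u, v} (Finset.insert_nonempty _ _)

theorem mergeL_f_self (δ : Fin d) (u v : Fin d → FDL r) (x : Fin r → Bool) :
    ((mergeL δ u v) δ).f x = (u δ).f x ⊓ (v δ).f x := by
  rw [mergeL, combL_f_self]
  simp

theorem mergeL_f_ne {k δ : Fin d} (h : k ≠ δ) (u v : Fin d → FDL r) (x : Fin r → Bool) :
    ((mergeL δ u v) k).f x = (u k).f x ⊔ (v k).f x := by
  rw [mergeL, combL_f_ne h]
  simp

theorem combL_singleton (δ : Fin d) (u : Fin d → FDL r) (h : ({u} : Finset _).Nonempty) :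
    combL δ {u} h = u := by
  refine brick_ext fun k x => ?_
  by_cases hk : k = δ
  · rw [hk, combL_f_self]; simp
  · rw [combL_f_ne hk]; simp

theorem combL_cons (δ : Fin d) (a : Fin d → FDL r) (s : Finset (Fin d → FDL r))
    (h : a ∉ s) (hs : s.Nonempty) (h' : (Finset.cons a s h).Nonempty) :
    combL δ (Finset.cons a s h) h' = mergeL δ a (combL δ s hs) := by
  refine brick_ext fun k x => ?_
  by_cases hk : k = δ
  · rw [hk, combL_f_self, mergeL_f_self, combL_f_self, Finset.inf_cons]
  · rw [combL_f_ne hk, mergeL_f_ne hk, combL_f_ne hk, Finset.sup_cons]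

/-- Binary closedness of a set of bricks in direction `δ`. -/
def ClosedB (δ : Fin d) (S : Set (Fin d → FDL r)) : Prop :=
  ∀ u ∈ S, ∀ v ∈ S, mergeL δ u v ∈ S

theorem comb_mem_of_closed {δ : Fin d} {S : Set (Fin d → FDL r)} (hS : ClosedB δ S)
    (A : Finset (Fin d → FDL r)) (hA : A.Nonempty) (hsub : ↑A ⊆ S) :
    combL δ A hA ∈ S := by
  classical
  revert hsub
  induction hA using Finset.Nonempty.cons_induction with
  | singleton a =>
      intro hsub
      rw [combL_singleton]
      exact hsub (by simp)
  | cons a s h hs ih =>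
      intro hsub
      have hsub' : ↑s ⊆ S := fun x hx => hsub (by simp [hx])
      have hmem : a ∈ S := hsub (by simp)
      rw [combL_cons δ a s h hs]
      exact hS a hmem _ (ih hsub')

theorem merge_union (δ : Fin d) (A B : Finset (Fin d → FDL r)) (hA : A.Nonempty)
    (hB : B.Nonempty) :
    mergeL δ (combL δ A hA) (combL δ B hB) =
      combL δ (A ∪ B) (hA.mono Finset.subset_union_left) := by
  refine brick_ext fun k x => ?_
  by_cases hk : k = δ
  · rw [hk, mergeL_f_self, combL_f_self, combL_f_self, combL_f_self, Finset.inf_union]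
  · rw [mergeL_f_ne hk, combL_f_ne hk, combL_f_ne hk, combL_f_ne hk, Finset.sup_union]

theorem prod_inf_sup {α β : Type*} (A : Finset α) (B : Finset β) (f : α → Bool) (g : β → Bool) :
    (A ×ˢ B).inf (fun p => f p.1 ⊔ g p.2) = A.inf f ⊔ B.inf g := by
  cases h : (A.inf f ⊔ B.inf g) with
  | true =>
      apply (binf_true _ _).mpr
      intro p hp
      rcases (bool_sup_true _ _).mp h with h1 | h1
      · have h2 := (binf_true A f).mp h1 p.1 (Finset.mem_product.mp hp).1
        rw [bool_sup_true]
        exact Or.inl h2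
      · have h2 := (binf_true B g).mp h1 p.2 (Finset.mem_product.mp hp).2
        rw [bool_sup_true]
        exact Or.inr h2
  | false =>
      rcases (bool_sup_false _ _).mp h with ⟨h1, h2⟩
      obtain ⟨a, ha, hfa⟩ := (binf_false A f).mp h1
      obtain ⟨b, hb, hgb⟩ := (binf_false B g).mp h2
      apply (binf_false _ _).mpr
      refine ⟨(a, b), Finset.mem_product.mpr ⟨ha, hb⟩, ?_⟩
      rw [bool_sup_false]
      exact ⟨hfa, hgb⟩

theorem prod_sup_inf {α β : Type*} (A : Finset α) (B : Finset β) (f : α → Bool) (g : β → Bool) :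
    (A ×ˢ B).sup (fun p => f p.1 ⊓ g p.2) = A.sup f ⊓ B.sup g := by
  cases h : (A.sup f ⊓ B.sup g) with
  | false =>
      apply (bsup_false _ _).mpr
      intro p hp
      rcases (bool_inf_false _ _).mp h with h1 | h1
      · have h2 := (bsup_false A f).mp h1 p.1 (Finset.mem_product.mp hp).1
        rw [bool_inf_false]
        exact Or.inl h2
      · have h2 := (bsup_false B g).mp h1 p.2 (Finset.mem_product.mp hp).2
        rw [bool_inf_false]
        exact Or.inr h2
  | true =>
      rcases (bool_inf_true _ _).mp h with ⟨h1, h2⟩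
      obtain ⟨a, ha, hfa⟩ := (bsup_true A f).mp h1
      obtain ⟨b, hb, hgb⟩ := (bsup_true B g).mp h2
      apply (bsup_true _ _).mpr
      refine ⟨(a, b), Finset.mem_product.mpr ⟨ha, hb⟩, ?_⟩
      rw [bool_inf_true]
      exact ⟨hfa, hgb⟩

theorem prod_sup_sup {α β : Type*} (A : Finset α) (B : Finset β) (hA : A.Nonempty)
    (hB : B.Nonempty) (f : α → Bool) (g : β → Bool) :
    (A ×ˢ B).sup (fun p => f p.1 ⊔ g p.2) = A.sup f ⊔ B.sup g := by
  cases h : (A.sup f ⊔ B.sup g) with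
  | false =>
      rcases (bool_sup_false _ _).mp h with ⟨h1, h2⟩
      apply (bsup_false _ _).mpr
      intro p hp
      have hf := (bsup_false A f).mp h1 p.1 (Finset.mem_product.mp hp).1
      have hg := (bsup_false B g).mp h2 p.2 (Finset.mem_product.mp hp).2
      rw [bool_sup_false]
      exact ⟨hf, hg⟩
  | true =>
      apply (bsup_true _ _).mpr
      rcases (bool_sup_true _ _).mp h with h1 | h1
      · obtain ⟨a, ha, hfa⟩ := (bsup_true A f).mp h1
        obtain ⟨b, hb⟩ := hB
        refine ⟨(a, b), Finset.mem_product.mpr ⟨ha, hb⟩, ?_⟩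
        rw [bool_sup_true]
        exact Or.inl hfa
      · obtain ⟨b, hb, hgb⟩ := (bsup_true B g).mp h1
        obtain ⟨a, ha⟩ := hA
        refine ⟨(a, b), Finset.mem_product.mpr ⟨ha, hb⟩, ?_⟩
        rw [bool_sup_true]
        exact Or.inr hgb

theorem merge_product {γ δ : Fin d} (hγδ : γ ≠ δ) (A B : Finset (Fin d → FDL r))
    (hA : A.Nonempty) (hB : B.Nonempty) :
    mergeL γ (combL δ A hA) (combL δ B hB) =
      combL δ ((A ×ˢ B).image fun p => mergeL γ p.1 p.2) ((hA.product hB).image _) := by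
  classical
  refine brick_ext fun k x => ?_
  by_cases hk : k = δ
  · rw [hk, mergeL_f_ne (Ne.symm hγδ), combL_f_self, combL_f_self, combL_f_self,
      Finset.inf_image]
    simp only [Function.comp_def]
    rw [Finset.inf_congr rfl (fun p (_ : p ∈ A ×ˢ B) => mergeL_f_ne (Ne.symm hγδ) p.1 p.2 x)]
    exact (prod_inf_sup A B _ _).symm
  · by_cases hkγ : k = γ
    · rw [hkγ, mergeL_f_self, combL_f_ne hγδ, combL_f_ne hγδ, combL_f_ne hγδ,
        Finset.sup_image]
      simp only [Function.comp_def]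
      rw [Finset.sup_congr rfl (fun p (_ : p ∈ A ×ˢ B) => mergeL_f_self γ p.1 p.2 x)]
      exact (prod_sup_inf A B _ _).symm
    · rw [mergeL_f_ne hkγ, combL_f_ne hk, combL_f_ne hk, combL_f_ne hk, Finset.sup_image]
      simp only [Function.comp_def]
      rw [Finset.sup_congr rfl (fun p (_ : p ∈ A ×ˢ B) => mergeL_f_ne hkγ p.1 p.2 x)]
      exact (prod_sup_sup A B hA hB _ _).symm

theorem subset_ExtL (δ : Fin d) (Q : Set (Fin d → FDL r)) : Q ⊆ ExtL δ Q := by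
  intro u hu
  exact ⟨{u}, Finset.singleton_nonempty u, by simpa using hu,
    (combL_singleton δ u (Finset.singleton_nonempty u)).symm⟩

theorem ExtL_closed (δ : Fin d) (Q : Set (Fin d → FDL r)) : ClosedB δ (ExtL δ Q) := by
  rintro u ⟨A, hA, hAQ, rfl⟩ v ⟨B, hB, hBQ, rfl⟩
  refine ⟨A ∪ B, hA.mono Finset.subset_union_left, ?_, ?_⟩
  · rw [Finset.coe_union]
    exact Set.union_subset hAQ hBQ
  · exact merge_union δ A B hA hB

theorem ExtL_closed_of_closed {γ δ : Fin d} (hγδ : γ ≠ δ) {Q : Set (Fin d → FDL r)}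
    (hQ : ClosedB γ Q) : ClosedB γ (ExtL δ Q) := by
  classical
  rintro u ⟨A, hA, hAQ, rfl⟩ v ⟨B, hB, hBQ, rfl⟩
  refine ⟨(A ×ˢ B).image fun p => mergeL γ p.1 p.2, (hA.product hB).image _, ?_, ?_⟩
  · intro x hx
    obtain ⟨p, hp, rfl⟩ := Finset.mem_image.mp hx
    exact hQ p.1 (hAQ (Finset.mem_product.mp hp).1) p.2 (hBQ (Finset.mem_product.mp hp).2)
  · exact merge_product hγδ A B hA hB

theorem subset_foldl (l : List (Fin d)) (Q : Set (Fin d → FDL r)) :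
    Q ⊆ l.foldl (fun S δ => ExtL δ S) Q := by
  induction l generalizing Q with
  | nil => exact fun u hu => hu
  | cons a tl ih => exact fun u hu => ih (ExtL a Q) (subset_ExtL a Q hu)

theorem closed_foldl_of_closed {δ : Fin d} (l : List (Fin d)) {Q : Set (Fin d → FDL r)}
    (h : ClosedB δ Q) : ClosedB δ (l.foldl (fun S δ' => ExtL δ' S) Q) := by
  induction l generalizing Q with
  | nil => exact h
  | cons a tl ih =>
      apply ih
      by_cases hδa : δ = a
      · rw [hδa] at h ⊢
        exact ExtL_closed a Q
      · exact ExtL_closed_of_closed hδa h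

theorem closed_foldl_of_mem {δ : Fin d} {l : List (Fin d)} (hδ : δ ∈ l)
    (Q : Set (Fin d → FDL r)) : ClosedB δ (l.foldl (fun S δ' => ExtL δ' S) Q) := by
  induction l generalizing Q with
  | nil => cases hδ
  | cons a tl ih =>
      rcases List.mem_cons.mp hδ with h | h
      · rw [h]
        exact closed_foldl_of_closed tl (ExtL_closed a Q)
      · exact ih h _

theorem subset_of_closed_foldl {T : Set (Fin d → FDL r)} (l : List (Fin d))
    {Q : Set (Fin d → FDL r)} (hQT : Q ⊆ T) (hT : ∀ δ, ClosedB δ T) :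
    l.foldl (fun S δ => ExtL δ S) Q ⊆ T := by
  induction l generalizing Q with
  | nil => exact hQT
  | cons a tl ih =>
      apply ih
      rintro u ⟨A, hA, hAQ, rfl⟩
      exact comb_mem_of_closed (hT a) A hA (fun x hx => hQT (hAQ hx))

theorem good_closed (δ : Fin d) :
    ClosedB δ (ExtAllL (Set.range (cubeL r d)) : Set (Fin d → FDL r)) :=
  closed_foldl_of_mem (List.mem_finRange δ) _

theorem cube_good (n : Fin r) : GoodL (cubeL r d n) :=
  subset_foldl _ _ ⟨n, rfl⟩

/-- The comb-closure of the cubes over the directions different from `j`. -/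
inductive Gp (j : Fin d) : (Fin d → FDL r) → Prop
  | cube (n : Fin r) : Gp j (cubeL r d n)
  | comb (δ : Fin d) (hδ : δ ≠ j) (A : Finset (Fin d → FDL r)) (hA : A.Nonempty)
      (h : ∀ a ∈ A, Gp j a) : Gp j (combL δ A hA)

theorem Gp_closedB {j δ : Fin d} (hδ : δ ≠ j) : ClosedB δ {b : Fin d → FDL r | Gp j b} := by
  intro u hu v hv
  exact Gp.comb δ hδ {u, v} (Finset.insert_nonempty _ _) (by
    intro a ha
    rcases Finset.mem_insert.mp ha with h | h
    · rw [h]; exact hu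
    · rw [Finset.mem_singleton.mp h]; exact hv)

theorem Gp_subset_good (j : Fin d) :
    {b : Fin d → FDL r | Gp j b} ⊆ ExtAllL (Set.range (cubeL r d)) := by
  intro b hb
  induction hb with
  | cube n => exact cube_good n
  | comb δ hδ A hA h ih => exact comb_mem_of_closed (good_closed δ) A hA (fun a ha => ih a ha)

theorem good_subset_ExtL_Gp (j : Fin d) :
    (ExtAllL (Set.range (cubeL r d)) : Set (Fin d → FDL r)) ⊆ ExtL j {b | Gp j b} := by
  apply subset_of_closed_foldl
  · rintro b ⟨n, rfl⟩
    exact subset_ExtL j _ (Gp.cube n)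
  · intro δ
    by_cases hδ : δ = j
    · rw [hδ]
      exact ExtL_closed j _
    · exact ExtL_closed_of_closed hδ (Gp_closedB hδ)

/-- `f` does not use the variable `n`. -/
def NFree (n : Fin r) (f : FDL r) : Prop :=
  ∀ (x : Fin r → Bool) (c : Bool), f.f (Function.update x n c) = f.f x

theorem nfree_of_not_depends {f : FDL r} {n : Fin r} (h : ¬ DependsL f n) : NFree n f := by
  intro x c
  have h' : ∀ y, f.f y = f.f (Function.update y n (!y n)) := by
    intro y
    by_contra hy
    exact h ⟨y, hy⟩
  by_cases hc : x n = c
  · rw [← hc, Function.update_eq_self]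
  · have hcc : c = !x n := by
      cases c <;> cases hxn : x n <;> simp_all
    rw [hcc]
    exact (h' x).symm

theorem not_depends_of_nfree {f : FDL r} {n : Fin r} (h : NFree n f) : ¬ DependsL f n := by
  rintro ⟨x, hx⟩
  exact hx (h x (!x n)).symm

theorem nfree_gen {n c : Fin r} (h : c ≠ n) : NFree n (FDL.gen c) := by
  intro x b
  simp [FDL.gen, Function.update_of_ne h]

/-- Key induction: if a brick in the comb-closure avoiding direction `j` has its `j`-th
coordinate vanishing at a point where the variable `n` is set, then all its coordinates
are independent of `n`. -/
theorem key_nfree {j : Fin d} {n : Fin r} {β : Fin d → FDL r} (hβ : Gp j β) :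
    ∀ z : Fin r → Bool, z n = true → (β j).f z = false → ∀ k, NFree n (β k) := by
  induction hβ with
  | cube c =>
      intro z hzn hz k
      have hcn : c ≠ n := by
        intro h
        rw [show (cubeL r d c j).f z = z c from rfl, h, hzn] at hz
        cases hz
      exact nfree_gen hcn
  | comb δ hδ A hA h ih =>
      intro z hzn hz k
      rw [combL_f_ne (Ne.symm hδ)] at hz
      have hz' : ∀ a ∈ A, (a j).f z = false := (bsup_false _ _).mp hz
      intro x c
      by_cases hk : k = δ
      · rw [hk, combL_f_self, combL_f_self]
        exact Finset.inf_congr rfl (fun a ha => ih a ha z hzn (hz' a ha) δ x c)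
      · rw [combL_f_ne hk, combL_f_ne hk]
        exact Finset.sup_congr rfl (fun a ha => ih a ha z hzn (hz' a ha) k x c)

/-- Main lemma: if a minimal brick has one coordinate independent of `n`,
then all its coordinates are independent of `n`. -/
theorem minimal_nfree {b : Fin d → FDL r} (hb : MinimalL b) {n : Fin r} {j : Fin d}
    (hj : ¬ DependsL (b j) n) : ∀ k, ¬ DependsL (b k) n := by
  classical
  have hjfree : NFree n (b j) := nfree_of_not_depends hj
  obtain ⟨B₀, hB₀, hsub, hbe⟩ := good_subset_ExtL_Gp j hb.1
  set B' := B₀.filter (fun β => NFree n (β j)) with hB'def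
  have hB'sub : B' ⊆ B₀ := Finset.filter_subset _ _
  have hfree : ∀ β ∈ B', ∀ k, NFree n (β k) := by
    intro β hβ k
    have hβ2 := Finset.mem_filter.mp hβ
    have hz : (β j).f (Function.update (fun _ => false) n true) = false := by
      rw [hβ2.2 (fun _ => false) true]
      exact (β j).map_bot
    exact key_nfree (hsub hβ2.1) _ (Function.update_self n true (fun _ => false)) hz k
  have hzero : ∀ z, (b j).f z = false → ∃ β ∈ B', (β j).f z = false := by
    intro z hzf
    have hz2 : (b j).f (Function.update z n true) = false := by
      rw [hjfree z true]; exact hzf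
    rw [hbe, combL_f_self] at hz2
    obtain ⟨β, hβ, hβf⟩ := (binf_false _ _).mp hz2
    have hall : ∀ k, NFree n (β k) :=
      key_nfree (hsub hβ) _ (Function.update_self n true z) hβf
    refine ⟨β, Finset.mem_filter.mpr ⟨hβ, hall j⟩, ?_⟩
    rw [← hall j z true]
    exact hβf
  obtain ⟨β₀, hβ₀, _⟩ := hzero (fun _ => false) (b j).map_bot
  have hB'ne : B'.Nonempty := ⟨β₀, hβ₀⟩
  set c := combL j B' hB'ne with hcdef
  have hcj : ∀ z, (c j).f z = (b j).f z := by
    intro z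
    cases hbz : (b j).f z with
    | false =>
        obtain ⟨β, hβ, hβf⟩ := hzero z hbz
        rw [hcdef, combL_f_self]
        exact (binf_false _ _).mpr ⟨β, hβ, hβf⟩
    | true =>
        rw [hcdef, combL_f_self]
        apply (binf_true _ _).mpr
        intro β hβ
        have hbz' := hbz
        rw [hbe, combL_f_self] at hbz'
        exact (binf_true _ _).mp hbz' β (hB'sub hβ)
  have hcGood : GoodL c := by
    rw [hcdef]
    exact comb_mem_of_closed (good_closed j) B' hB'ne
      (fun β hβ => Gp_subset_good j (hsub (hB'sub hβ)))
  have hcle : c ≤ b := by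
    intro k
    by_cases hk : k = j
    · rw [hk]
      intro x
      rw [hcj x]
    · intro x
      rw [hcdef, combL_f_ne hk, hbe, combL_f_ne hk]
      exact Finset.sup_mono hB'sub
  have hcb : c = b := hb.2 c hcGood hcle
  intro k
  by_cases hk : k = j
  · rw [hk]; exact hj
  · apply not_depends_of_nfree
    intro x cc
    rw [← hcb, hcdef, combL_f_ne hk, combL_f_ne hk]
    exact Finset.sup_congr rfl (fun β hβ => hfree β hβ k x cc)

end Statement7Aux

/-- Equal-Alphabet Lemma, Fact F2: every minimal brick of `Λ[r,d]` is
balanced: all of its `d` coordinates have the same alphabet. -/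
theorem statement7 {r d : ℕ} (b : Fin d → FDL r) (hb : MinimalL b) :
    BalancedL b := by
  intro i j
  ext n
  simp only [alphabetL, Finset.mem_filter, Finset.mem_univ, true_and]
  constructor
  · intro hdep
    by_contra hnd
    exact (minimal_nfree hb hnd i) hdep
  · intro hdep
    by_contra hnd
    exact (minimal_nfree hb hnd j) hdep
end
end

section
/- (Stability of minimality under adding an envelope coordinate, finite form of the Universally-minimal Lemma, Fact F3.) Let d ≥ 2 and let b ∈ Λ[r,d] with envelope e_b. Then b is a minimal brick of Λ[r,d] if and only if the brick b' ∈ Λ[r,d+1] defined by b' i = b i for i < d and b' d = e_b is a minimal brick of Λ[r,d+1]. -/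
open scoped Classical

noncomputable section

namespace S8

lemma bool_le_iff {a b : Bool} : a ≤ b ↔ (a = true → b = true) := by
  cases a <;> cases b <;> decide

lemma beq_of_iff {a b : Bool} (h : (a = true) ↔ (b = true)) : a = b := by
  cases a <;> cases b <;> simp_all

lemma bsup_false_iff {α : Type*} (s : Finset α) (f : α → Bool) :
    s.sup f = false ↔ ∀ a ∈ s, f a = false := by
  rw [show (false : Bool) = ⊥ from rfl, Finset.sup_eq_bot_iff]

lemma bsup_true_iff {α : Type*} (s : Finset α) (f : α → Bool) :
    s.sup f = true ↔ ∃ a ∈ s, f a = true := by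
  constructor
  · intro h
    by_contra hc
    push_neg at hc
    have hf : s.sup f = false := (bsup_false_iff s f).2 (fun a ha => by
      have := hc a ha; revert this; cases f a <;> simp)
    rw [hf] at h; exact Bool.noConfusion h
  · rintro ⟨a, ha, hfa⟩
    have h1 : f a ≤ s.sup f := Finset.le_sup ha
    rw [hfa] at h1
    exact le_antisymm (by cases hs : s.sup f <;> simp) h1

lemma binf_true_iff {α : Type*} (s : Finset α) (f : α → Bool) :
    s.inf f = true ↔ ∀ a ∈ s, f a = true := by
  rw [show (true : Bool) = ⊤ from rfl, Finset.inf_eq_top_iff]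

lemma binf_false_iff {α : Type*} (s : Finset α) (f : α → Bool) :
    s.inf f = false ↔ ∃ a ∈ s, f a = false := by
  constructor
  · intro h
    by_contra hc
    push_neg at hc
    have hf : s.inf f = true := (binf_true_iff s f).2 (fun a ha => by
      have := hc a ha; revert this; cases f a <;> simp)
    rw [hf] at h; exact Bool.noConfusion h
  · rintro ⟨a, ha, hfa⟩
    have h1 : s.inf f ≤ f a := Finset.inf_le ha
    rw [hfa] at h1
    exact le_antisymm h1 (by cases hs : s.inf f <;> simp)

lemma sup_sup_bool {α : Type*} {r : ℕ} (s : Finset α) (g : α → Finset (Fin r))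
    (x : Fin r → Bool) : s.sup (fun a => (g a).sup x) = (s.sup g).sup x := by
  apply beq_of_iff
  rw [bsup_true_iff, bsup_true_iff]
  constructor
  · rintro ⟨a, ha, h⟩
    rw [bsup_true_iff] at h
    obtain ⟨n, hn, hx⟩ := h
    exact ⟨n, Finset.mem_sup.2 ⟨a, ha, hn⟩, hx⟩
  · rintro ⟨n, hn, hx⟩
    obtain ⟨a, ha, hna⟩ := Finset.mem_sup.1 hn
    exact ⟨a, ha, (bsup_true_iff _ _).2 ⟨n, hna, hx⟩⟩

variable {r : ℕ}

lemma fdl_le_iff {a b : FDL r} : a ≤ b ↔ ∀ x, a.f x ≤ b.f x := Iff.rfl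

lemma eval_eq_of_agree (f : FDL r) :
    ∀ (m : ℕ) (x y : Fin r → Bool),
      (Finset.univ.filter (fun n => x n ≠ y n)).card ≤ m →
      (∀ n, DependsL f n → x n = y n) → f.f x = f.f y := by
  intro m
  induction m with
  | zero =>
    intro x y hc h
    have hxy : ∀ n, x n = y n := by
      intro n; by_contra hn
      have hmem : n ∈ Finset.univ.filter (fun n => x n ≠ y n) := by
        simp [hn]
      have := Finset.card_pos.mpr ⟨n, hmem⟩
      omega
    rw [funext hxy]
  | succ m ih =>
    intro x y hc h
    by_cases hxy : ∀ n, x n = y n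
    · rw [funext hxy]
    · push_neg at hxy
      obtain ⟨n, hn⟩ := hxy
      have hdep : ¬ DependsL f n := fun hd => hn (h n hd)
      have hxn : x n = ! y n := by revert hn; cases x n <;> cases y n <;> decide
      have h1 : f.f (Function.update y n (x n)) = f.f y := by
        have h2 := not_exists.mp hdep y
        have h3 : f.f y = f.f (Function.update y n (!y n)) := by
          by_contra hne; exact h2 hne
        rw [hxn, ← h3]
      rw [← h1]
      apply ih x (Function.update y n (x n))
      · have hsub : (Finset.univ.filter (fun m' => x m' ≠ Function.update y n (x n) m')) ⊆
            (Finset.univ.filter (fun m' => x m' ≠ y m')).erase n := by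
          intro m' hm'
          simp only [Finset.mem_filter, Finset.mem_univ, true_and] at hm'
          rcases eq_or_ne m' n with h' | hne
          · subst h'
            exact absurd (Function.update_self m' (x m') y).symm hm'
          · rw [Function.update_of_ne hne] at hm'
            exact Finset.mem_erase.2 ⟨hne, by simp [hm']⟩
        have hnmem : n ∈ Finset.univ.filter (fun m' => x m' ≠ y m') := by simp [hn]
        have := Finset.card_le_card hsub
        rw [Finset.card_erase_of_mem hnmem] at this
        omega
      · intro n' hd
        rcases eq_or_ne n' n with h' | hne
        · subst h'; rw [Function.update_self]
        · rw [Function.update_of_ne hne]; exact h n' hd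

lemma eval_depends (f : FDL r) {x y : Fin r → Bool}
    (h : ∀ n, DependsL f n → x n = y n) : f.f x = f.f y :=
  eval_eq_of_agree f _ x y le_rfl h

lemma eval_true_of (f : FDL r) {x : Fin r → Bool}
    (h : ∀ n, DependsL f n → x n = true) : f.f x = true := by
  have := eval_depends f (y := fun _ => true) h
  rw [this, f.map_top]

lemma eval_false_of (f : FDL r) {x : Fin r → Bool}
    (h : ∀ n, DependsL f n → x n = false) : f.f x = false := by
  have := eval_depends f (y := fun _ => false) h
  rw [this, f.map_bot]

lemma exists_depends (f : FDL r) : ∃ n, DependsL f n := by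
  by_contra h
  push_neg at h
  have h2 : f.f (fun _ => true) = f.f (fun _ => false) :=
    eval_depends f (fun n hd => absurd hd (h n))
  rw [f.map_top, f.map_bot] at h2
  exact Bool.noConfusion h2

lemma not_depends_update (f : FDL r) {n : Fin r} (h : ¬ DependsL f n)
    (x : Fin r → Bool) (v : Bool) : f.f (Function.update x n v) = f.f x :=
  eval_depends f (fun m hd => Function.update_of_ne (fun e => h (by rw [← e]; exact hd)) v x)

def sFDL (U : Finset (Fin r)) (hU : U.Nonempty) : FDL r where
  f := fun x => U.sup x
  mono := fun x y h => Finset.sup_mono_fun (fun n _ => h n)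
  map_bot := (bsup_false_iff _ _).2 (fun _ _ => rfl)
  map_top := (bsup_true_iff _ _).2 ⟨hU.choose, hU.choose_spec, rfl⟩

end S8

namespace S8

variable {r : ℕ}

/-- The inductive stages of the construction of good bricks, with support sets. -/
def Stage (r : ℕ) : (k : ℕ) → Set ((Fin k → FDL r) × Finset (Fin r))
  | 0 => {p | ∃ n, p.2 = {n}}
  | (k+1) => {p | ∃ B : Finset ((Fin k → FDL r) × Finset (Fin r)), B.Nonempty ∧
      (↑B ⊆ Stage r k) ∧ p.2 = B.sup Prod.snd ∧
      (∀ (i : Fin k) (x : Fin r → Bool),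
        (p.1 i.castSucc).f x = B.sup (fun q => (q.1 i).f x)) ∧
      (∀ x : Fin r → Bool, (p.1 (Fin.last k)).f x = B.inf (fun q => q.2.sup x))}

lemma stage_basic : ∀ (k : ℕ) (p : (Fin k → FDL r) × Finset (Fin r)),
    p ∈ Stage r k → p.2.Nonempty ∧ ∀ (i : Fin k) (n : Fin r),
      DependsL (p.1 i) n → n ∈ p.2 := by
  intro k
  induction k with
  | zero =>
    rintro p ⟨n, hn⟩
    exact ⟨by rw [hn]; exact Finset.singleton_nonempty n, fun i => i.elim0⟩
  | succ k ih =>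
    rintro p ⟨B, hBne, hBsub, hsnd, heq1, heq2⟩
    constructor
    · obtain ⟨q, hq⟩ := hBne
      obtain ⟨m, hm⟩ := (ih q (hBsub hq)).1
      rw [hsnd]
      exact ⟨m, Finset.mem_sup.2 ⟨q, hq, hm⟩⟩
    · intro i n hdep
      by_contra hn
      obtain ⟨x, hx⟩ := hdep
      apply hx
      have hnmem : ∀ q ∈ B, n ∉ q.2 := by
        intro q hq hmem
        exact hn (hsnd ▸ Finset.mem_sup.2 ⟨q, hq, hmem⟩)
      rcases Fin.eq_castSucc_or_eq_last i with ⟨i', rfl⟩ | rfl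
      · rw [heq1, heq1]
        apply Finset.sup_congr rfl
        intro q hq
        exact (not_depends_update (q.1 i')
          (fun hd => hnmem q hq ((ih q (hBsub hq)).2 i' n hd)) x (!x n)).symm
      · rw [heq2, heq2]
        apply Finset.inf_congr rfl
        intro q hq
        apply Finset.sup_congr rfl
        intro m hm
        rw [Function.update_of_ne (fun e => hnmem q hq (by rw [← e]; exact hm))]

lemma stage_P : ∀ (k : ℕ) (p : (Fin k → FDL r) × Finset (Fin r)),
    p ∈ Stage r k → ∀ (i j : Fin k), i ≠ j → ∀ x : Fin r → Bool,
      (p.1 j).f (fun n => !(x n)) = false → (p.1 i).f x = true := by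
  intro k
  induction k with
  | zero => intro p _ i; exact i.elim0
  | succ k ih =>
    rintro p ⟨B, hBne, hBsub, hsnd, heq1, heq2⟩ i j hij x hjx
    rcases Fin.eq_castSucc_or_eq_last i with ⟨i', rfl⟩ | rfl
    · rcases Fin.eq_castSucc_or_eq_last j with ⟨j', rfl⟩ | rfl
      · -- both castSucc
        have hij' : i' ≠ j' := fun e => hij (by rw [e])
        rw [heq1] at hjx
        rw [heq1]
        obtain ⟨q0, hq0⟩ := hBne
        have hall := (bsup_false_iff _ _).1 hjx q0 hq0
        exact (bsup_true_iff _ _).2 ⟨q0, hq0, ih q0 (hBsub hq0) i' j' hij' x hall⟩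
      · -- i = castSucc, j = last
        rw [heq2] at hjx
        obtain ⟨q0, hq0, hq0x⟩ := (binf_false_iff _ _).1 hjx
        have hmem : ∀ m ∈ q0.2, x m = true := by
          intro m hm
          have := (bsup_false_iff _ _).1 hq0x m hm
          revert this; cases x m <;> simp
        rw [heq1]
        apply (bsup_true_iff _ _).2
        refine ⟨q0, hq0, eval_true_of _ (fun m hd => hmem m ((stage_basic k q0 (hBsub hq0)).2 i' m hd))⟩
    · -- i = last
      rcases Fin.eq_castSucc_or_eq_last j with ⟨j', rfl⟩ | rfl
      · rw [heq1] at hjx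
        have hall := (bsup_false_iff _ _).1 hjx
        rw [heq2]
        apply (binf_true_iff _ _).2
        intro q hq
        by_contra hqs
        have hqs' : q.2.sup x = false := by revert hqs; cases q.2.sup x <;> simp
        have hxm : ∀ m ∈ q.2, x m = false := (bsup_false_iff _ _).1 hqs'
        have : (q.1 j').f (fun n => !(x n)) = true :=
          eval_true_of _ (fun m hd => by
            rw [hxm m ((stage_basic k q (hBsub hq)).2 j' m hd)]; rfl)
        rw [hall q hq] at this
        exact Bool.noConfusion this
      · exact absurd rfl hij

/-- Substitution of variables. -/
def substF (σ : Fin r → Fin r) (f : FDL r) : FDL r where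
  f := fun x => f.f (fun n => x (σ n))
  mono := fun x y h => f.mono (fun n => h (σ n))
  map_bot := f.map_bot
  map_top := f.map_top

lemma substF_mono (σ : Fin r → Fin r) {f g : FDL r} (h : f ≤ g) :
    substF σ f ≤ substF σ g := fun x => h _

lemma substF_fix (σ : Fin r → Fin r) (f : FDL r)
    (h : ∀ n, DependsL f n → σ n = n) : substF σ f = f := by
  apply FDL.ext'
  funext x
  exact eval_depends f (fun n hd => by rw [h n hd])

lemma stage_subst (σ : Fin r → Fin r) : ∀ (k : ℕ) (p : (Fin k → FDL r) × Finset (Fin r)),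
    p ∈ Stage r k → ((fun i => substF σ (p.1 i)), p.2.image σ) ∈ Stage r k := by
  intro k
  induction k with
  | zero =>
    rintro p ⟨n, hn⟩
    exact ⟨σ n, by rw [hn, Finset.image_singleton]⟩
  | succ k ih =>
    rintro p ⟨B, hBne, hBsub, hsnd, heq1, heq2⟩
    refine ⟨B.image (fun q => ((fun i => substF σ (q.1 i)), q.2.image σ)),
      hBne.image _, ?_, ?_, ?_, ?_⟩
    · rintro q' hq'
      simp only [Finset.coe_image, Set.mem_image, Finset.mem_coe] at hq'
      obtain ⟨q, hq, rfl⟩ := hq'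
      exact ih q (hBsub hq)
    · -- snd
      rw [hsnd]
      ext n
      constructor
      · intro hn
        obtain ⟨m, hm, rfl⟩ := Finset.mem_image.1 hn
        obtain ⟨q, hq, hmq⟩ := Finset.mem_sup.1 hm
        refine Finset.mem_sup.2 ⟨_, Finset.mem_image.2 ⟨q, hq, rfl⟩, ?_⟩
        exact Finset.mem_image.2 ⟨m, hmq, rfl⟩
      · intro hn
        obtain ⟨q', hq', hn2⟩ := Finset.mem_sup.1 hn
        obtain ⟨q, hq, rfl⟩ := Finset.mem_image.1 hq'
        obtain ⟨m, hmq, rfl⟩ := Finset.mem_image.1 hn2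
        exact Finset.mem_image.2 ⟨m, Finset.mem_sup.2 ⟨q, hq, hmq⟩, rfl⟩
    · intro i x
      have := heq1 i (fun n => x (σ n))
      simp only [substF] at this ⊢
      rw [this, Finset.sup_image]
      rfl
    · intro x
      have := heq2 (fun n => x (σ n))
      simp only [substF] at this ⊢
      rw [this, Finset.inf_image]
      apply Finset.inf_congr rfl
      intro q hq
      show q.2.sup (fun n => x (σ n)) = (Finset.image σ q.2).sup x
      rw [Finset.sup_image]
      rfl

end S8

namespace S8

variable {r D : ℕ}

lemma combL_f_ne {d' : ℕ} {δ j : Fin d'} (A : Finset (Fin d' → FDL r))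
    (hA : A.Nonempty) (h : j ≠ δ) (x : Fin r → Bool) :
    (combL δ A hA j).f x = A.sup (fun a => (a j).f x) := by
  simp only [combL]; rw [if_neg h]

lemma combL_f_eq {d' : ℕ} {δ : Fin d'} (A : Finset (Fin d' → FDL r))
    (hA : A.Nonempty) (x : Fin r → Bool) :
    (combL δ A hA δ).f x = A.inf (fun a => (a δ).f x) := by
  unfold combL
  rw [if_pos rfl]

def SetAt (r D k : ℕ) : Set (Fin D → FDL r) :=
  ((List.finRange D).take k).foldl (fun S δ => ExtL δ S) (Set.range (cubeL r D))

lemma setAt_zero : SetAt r D 0 = Set.range (cubeL r D) := rfl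

lemma setAt_succ {k : ℕ} (hk : k < D) :
    SetAt r D (k+1) = ExtL ⟨k, hk⟩ (SetAt r D k) := by
  unfold SetAt
  have htake : (List.finRange D).take (k+1) = (List.finRange D).take k ++ [⟨k, hk⟩] := by
    rw [List.take_succ]
    have hl : k < (List.finRange D).length := by simpa using hk
    rw [List.getElem?_eq_getElem hl]
    simp [List.getElem_finRange]
  rw [htake, List.foldl_append]
  rfl

lemma goodL_iff_setAt {b : Fin D → FDL r} : GoodL b ↔ b ∈ SetAt r D D := by
  unfold GoodL ExtAllL SetAt
  rw [List.take_of_length_le (le_of_eq List.length_finRange)]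

def Emb (r D k : ℕ) (p : (Fin k → FDL r) × Finset (Fin r)) (hp : p ∈ Stage r k) :
    Fin D → FDL r :=
  fun j => if h : (j : ℕ) < k then p.1 ⟨j, h⟩ else sFDL p.2 (stage_basic k p hp).1

lemma emb_f_lt {k : ℕ} {p : (Fin k → FDL r) × Finset (Fin r)} (hp : p ∈ Stage r k)
    {j : Fin D} {i : Fin k} (hji : (j : ℕ) = (i : ℕ)) (x : Fin r → Bool) :
    (Emb r D k p hp j).f x = (p.1 i).f x := by
  have hlt : (j : ℕ) < k := hji ▸ i.isLt
  unfold Emb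
  rw [dif_pos hlt]
  have h2 : (⟨(j : ℕ), hlt⟩ : Fin k) = i := Fin.ext hji
  rw [h2]

lemma emb_f_ge {k : ℕ} {p : (Fin k → FDL r) × Finset (Fin r)} (hp : p ∈ Stage r k)
    {j : Fin D} (h : k ≤ (j : ℕ)) (x : Fin r → Bool) :
    (Emb r D k p hp j).f x = p.2.sup x := by
  unfold Emb
  rw [dif_neg (by omega)]
  rfl

theorem inv (r D : ℕ) : ∀ (k : ℕ), k ≤ D →
    SetAt r D k = {v | ∃ p, ∃ hp : p ∈ Stage r k, v = Emb r D k p hp} := by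
  intro k
  induction k with
  | zero =>
    intro _
    ext b
    simp only [setAt_zero, Set.mem_range, Set.mem_setOf_eq]
    constructor
    · rintro ⟨n, rfl⟩
      refine ⟨(fun i => i.elim0, {n}), ⟨n, rfl⟩, ?_⟩
      funext j
      apply FDL.ext'; funext x
      refine Eq.trans ?_ (emb_f_ge _ (Nat.zero_le _) x).symm
      show x n = Finset.sup {n} x
      rw [Finset.sup_singleton]
    · rintro ⟨p, hp, rfl⟩
      obtain ⟨n, hn⟩ := hp
      refine ⟨n, ?_⟩
      funext j
      apply FDL.ext'; funext x
      refine Eq.trans ?_ (emb_f_ge _ (Nat.zero_le _) x).symm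
      rw [hn]
      show x n = Finset.sup {n} x
      rw [Finset.sup_singleton]
  | succ k ih =>
    intro hk1
    have hk : k < D := Nat.lt_of_lt_of_le (Nat.lt_succ_self k) hk1
    have hkle : k ≤ D := Nat.le_of_lt hk
    rw [setAt_succ hk, ih hkle]
    ext b
    simp only [ExtL, Set.mem_setOf_eq]
    constructor
    · rintro ⟨A, hA, hsub, rfl⟩
      have hch : ∀ a : {a // a ∈ A}, ∃ p, ∃ hp : p ∈ Stage r k,
          (a : Fin D → FDL r) = Emb r D k p hp := fun a => hsub a.2
      choose φ hφ hEq using hch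
      set δ : Fin D := ⟨k, hk⟩ with hδ
      set p1 : Fin (k+1) → FDL r :=
        fun i => combL δ A hA ⟨(i : ℕ), Nat.lt_of_lt_of_le i.isLt hk1⟩ with hp1
      set B : Finset ((Fin k → FDL r) × Finset (Fin r)) := A.attach.image φ with hB
      have hBne : B.Nonempty :=
        Finset.Nonempty.image (Finset.attach_nonempty_iff.2 hA) φ
      have hstage : (p1, B.sup Prod.snd) ∈ Stage r (k+1) := by
        refine ⟨B, hBne, ?_, rfl, ?_, ?_⟩
        · rintro q hq
          rw [hB] at hq
          simp only [Finset.coe_image, Set.mem_image, Finset.mem_coe] at hq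
          obtain ⟨a, _, rfl⟩ := hq
          exact hφ a
        · intro i x
          have hne : (⟨((i.castSucc : Fin (k+1)) : ℕ),
              Nat.lt_of_lt_of_le (i.castSucc).isLt hk1⟩ : Fin D) ≠ δ := by
            apply Fin.ne_of_val_ne
            simp [hδ]
            omega
          show (combL δ A hA _).f x = _
          rw [combL_f_ne A hA hne x]
          rw [hB, Finset.sup_image, ← Finset.sup_attach]
          apply Finset.sup_congr rfl
          intro a _
          rw [hEq a]
          exact emb_f_lt (hφ a) (by simp) x
        · intro x
          have heqδ : (⟨((Fin.last k : Fin (k+1)) : ℕ),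
              Nat.lt_of_lt_of_le (Fin.last k).isLt hk1⟩ : Fin D) = δ := by
            apply Fin.ext; simp [hδ]
          show (combL δ A hA _).f x = _
          rw [heqδ, combL_f_eq A hA x]
          rw [hB, Finset.inf_image, ← Finset.inf_attach]
          apply Finset.inf_congr rfl
          intro a _
          rw [hEq a]
          exact emb_f_ge (hφ a) (by simp [hδ]) x
      refine ⟨(p1, B.sup Prod.snd), hstage, ?_⟩
      funext j
      apply FDL.ext'; funext x
      by_cases hj : (j : ℕ) < k + 1
      · rw [emb_f_lt (j := j) hstage (i := ⟨(j : ℕ), hj⟩) rfl x]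
      · rw [emb_f_ge (j := j) hstage (by omega) x]
        have hne : j ≠ δ := Fin.ne_of_val_ne (by simp [hδ]; omega)
        rw [combL_f_ne A hA hne x]
        rw [← sup_sup_bool]
        rw [hB, Finset.sup_image, ← Finset.sup_attach (s := A)]
        apply Finset.sup_congr rfl
        intro a _
        rw [hEq a]
        exact emb_f_ge (hφ a) (by omega) x
    · rintro ⟨p, hp, rfl⟩
      have hp' := hp
      obtain ⟨B, hBne, hBsub, hsnd, heq1, heq2⟩ := hp'
      set δ : Fin D := ⟨k, hk⟩ with hδ
      set A : Finset (Fin D → FDL r) :=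
        B.attach.image (fun q => Emb r D k q.1 (hBsub q.2)) with hA
      have hAne : A.Nonempty :=
        Finset.Nonempty.image (Finset.attach_nonempty_iff.2 hBne) _
      refine ⟨A, hAne, ?_, ?_⟩
      · rintro a ha
        rw [hA] at ha
        simp only [Finset.coe_image, Set.mem_image, Finset.mem_coe] at ha
        obtain ⟨q, _, rfl⟩ := ha
        exact ⟨q.1, hBsub q.2, rfl⟩
      · funext j
        apply FDL.ext'; funext x
        rcases lt_trichotomy ((j : ℕ)) k with hjk | hjk | hjk
        · rw [emb_f_lt (j := j) hp (i := ⟨(j : ℕ), by omega⟩) rfl x]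
          have hic : (⟨(j : ℕ), by omega⟩ : Fin (k+1)) = (⟨(j : ℕ), hjk⟩ : Fin k).castSucc :=
            Fin.ext (by simp)
          rw [hic, heq1]
          have hne : j ≠ δ := Fin.ne_of_val_ne (by simp [hδ]; omega)
          rw [combL_f_ne A hAne hne x]
          rw [hA, Finset.sup_image, ← Finset.sup_attach (s := B)]
          apply Finset.sup_congr rfl
          intro q _
          exact (emb_f_lt (hBsub q.2) rfl x).symm
        · rw [emb_f_lt (j := j) hp (i := ⟨(j : ℕ), by omega⟩) rfl x]
          have hic : (⟨(j : ℕ), by omega⟩ : Fin (k+1)) = Fin.last k :=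
            Fin.ext (by simp [hjk])
          rw [hic, heq2]
          have hje : j = δ := Fin.ext (by simp [hδ, hjk])
          rw [hje, combL_f_eq A hAne x]
          rw [hA, Finset.inf_image, ← Finset.inf_attach]
          apply Finset.inf_congr rfl
          intro q _
          exact (emb_f_ge (hBsub q.2) (le_of_eq (by simp [hδ])) x).symm
        · rw [emb_f_ge (j := j) hp (by omega) x, hsnd, ← sup_sup_bool]
          have hne : j ≠ δ := Fin.ne_of_val_ne (by simp [hδ]; omega)
          rw [combL_f_ne A hAne hne x]
          rw [hA, Finset.sup_image, ← Finset.sup_attach (s := B)]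
          apply Finset.sup_congr rfl
          intro q _
          exact (emb_f_ge (hBsub q.2) (by omega) x).symm

theorem good_iff_stage {b : Fin D → FDL r} :
    GoodL b ↔ ∃ U, (b, U) ∈ Stage r D := by
  rw [goodL_iff_setAt, inv r D D le_rfl]
  constructor
  · rintro ⟨p, hp, hEq⟩
    refine ⟨p.2, ?_⟩
    have h1 : b = p.1 := by
      funext j
      rw [hEq]
      apply FDL.ext'; funext x
      exact emb_f_lt (j := j) hp (i := ⟨(j : ℕ), j.isLt⟩) rfl x |>.trans (by rw [Fin.eta])
    rw [h1, Prod.mk.eta]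
    exact hp
  · rintro ⟨U, hU⟩
    refine ⟨(b, U), hU, ?_⟩
    funext j
    apply FDL.ext'; funext x
    rw [emb_f_lt (j := j) hU (i := ⟨(j : ℕ), j.isLt⟩) rfl x, Fin.eta]

end S8


/-- Stability of minimality under adding an envelope coordinate, finite
form of the Universally-minimal Lemma, Fact F3: for `d ≥ 2` and `b ∈ Λ[r,d]` with
envelope `e_b`, the brick `b` is minimal in `Λ[r,d]` iff the brick `b' ∈ Λ[r,d+1]`
with `b' i = b i` for `i < d` and `b' d = e_b` is minimal in `Λ[r,d+1]`. -/
theorem statement8 {r d : ℕ} (hd : 2 ≤ d) (b : Fin d → FDL r)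
    (e : FDL r) (he : e.f = envFunL b)
    (b' : Fin (d + 1) → FDL r)
    (hcast : ∀ i : Fin d, b' i.castSucc = b i)
    (hlast : b' (Fin.last d) = e) :
    MinimalL b ↔ MinimalL b' := by
  classical
  set V : Finset (Fin r) := brickAlphabetL b with hV
  have hmemV : ∀ n, n ∈ V ↔ ∃ i, DependsL (b i) n := by
    intro n; rw [hV]; simp [brickAlphabetL]
  have hVne : V.Nonempty := by
    obtain ⟨n, hn⟩ := S8.exists_depends (b ⟨0, by omega⟩)
    exact ⟨n, (hmemV n).2 ⟨_, hn⟩⟩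
  have hef : ∀ x, e.f x = V.sup x := by intro x; rw [he]; rfl
  have hgoodV : GoodL b → (b, V) ∈ S8.Stage r d := by
    intro hg
    obtain ⟨U0, hU0⟩ := S8.good_iff_stage.1 hg
    obtain ⟨m0, hm0⟩ := hVne
    set σ : Fin r → Fin r := fun n => if n ∈ V then n else m0 with hσ
    have hsub := S8.stage_subst σ d (b, U0) hU0
    have hfix : (fun i => S8.substF σ ((b, U0).1 i)) = b := by
      funext i
      apply S8.substF_fix
      intro n hdep
      simp only [hσ]
      rw [if_pos ((hmemV n).2 ⟨i, hdep⟩)]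
    rw [hfix] at hsub
    have himg : U0.image σ = V := by
      apply Finset.Subset.antisymm
      · intro n hn
        obtain ⟨m, _, rfl⟩ := Finset.mem_image.1 hn
        simp only [hσ]
        by_cases hmV : m ∈ V
        · rw [if_pos hmV]; exact hmV
        · rw [if_neg hmV]; exact hm0
      · intro n hn
        obtain ⟨i, hi⟩ := (hmemV n).1 hn
        exact (S8.stage_basic d _ hsub).2 i n hi
    rw [himg] at hsub
    exact hsub
  have hb'stage : (b, V) ∈ S8.Stage r d → (b', V) ∈ S8.Stage r (d+1) := by
    intro hbV
    refine ⟨{(b, V)}, Finset.singleton_nonempty _, ?_, ?_, ?_, ?_⟩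
    · intro q hq
      rw [Finset.mem_coe, Finset.mem_singleton] at hq
      rw [hq]; exact hbV
    · rw [Finset.sup_singleton]
    · intro i x
      rw [Finset.sup_singleton]
      show (b' i.castSucc).f x = (b i).f x
      rw [hcast]
    · intro x
      rw [Finset.inf_singleton]
      show (b' (Fin.last d)).f x = V.sup x
      rw [hlast]
      exact hef x
  constructor
  · rintro ⟨hbgood, hbmin⟩
    have hbV := hgoodV hbgood
    have hb'good : GoodL b' := S8.good_iff_stage.2 ⟨V, hb'stage hbV⟩
    refine ⟨hb'good, ?_⟩
    intro c' hc'good hc'le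
    obtain ⟨U', hU'⟩ := S8.good_iff_stage.1 hc'good
    obtain ⟨B, hBne, hBsub, hsnd, heq1, heq2⟩ := hU'
    have hq1 : ∀ q ∈ B, q.1 = b := by
      intro q hq
      apply hbmin
      · exact S8.good_iff_stage.2 ⟨q.2, by rw [Prod.mk.eta]; exact hBsub hq⟩
      · intro i x
        rw [S8.bool_le_iff]
        intro hx
        have h1 : (c' i.castSucc).f x = true := by
          rw [heq1]
          exact (S8.bsup_true_iff _ _).2 ⟨q, hq, hx⟩
        have h3 : (b' i.castSucc).f x = true := S8.bool_le_iff.1 (hc'le i.castSucc x) h1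
        rw [hcast] at h3
        exact h3
    funext j
    rcases Fin.eq_castSucc_or_eq_last j with ⟨i, rfl⟩ | rfl
    · apply FDL.ext'; funext x
      rw [heq1, hcast]
      apply S8.beq_of_iff
      rw [S8.bsup_true_iff]
      constructor
      · rintro ⟨q, hq, hx⟩
        rw [hq1 q hq] at hx; exact hx
      · intro hx
        obtain ⟨q, hq⟩ := hBne
        exact ⟨q, hq, by rw [hq1 q hq]; exact hx⟩
    · apply FDL.ext'; funext x
      apply S8.beq_of_iff
      constructor
      · intro h
        have h2 := S8.bool_le_iff.1 (hc'le (Fin.last d) x) h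
        exact h2
      · intro h
        rw [hlast, hef] at h
        rw [heq2]
        apply (S8.binf_true_iff _ _).2
        intro q hq
        have hVsub : V ⊆ q.2 := by
          intro n hn
          obtain ⟨i, hi⟩ := (hmemV n).1 hn
          have hdq : DependsL (q.1 i) n := by rw [hq1 q hq]; exact hi
          exact (S8.stage_basic d q (hBsub hq)).2 i n hdq
        exact S8.bool_le_iff.1 (Finset.sup_mono hVsub) h
  · rintro ⟨hb'good, hb'minr⟩
    have hkey : ∀ (c : Fin d → FDL r) (W : Finset (Fin r)),
        ((c, W) ∈ S8.Stage r d) → (∀ i, c i ≤ b i) → W ⊆ V → c = b := by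
      intro c W hcW hcle hWV
      have hWne : W.Nonempty := (S8.stage_basic d (c, W) hcW).1
      set c2 : Fin (d+1) → FDL r := Fin.snoc c (S8.sFDL W hWne) with hc2
      have hc2stage : (c2, W) ∈ S8.Stage r (d+1) := by
        refine ⟨{(c, W)}, Finset.singleton_nonempty _, ?_, ?_, ?_, ?_⟩
        · intro q hq
          rw [Finset.mem_coe, Finset.mem_singleton] at hq
          rw [hq]; exact hcW
        · rw [Finset.sup_singleton]
        · intro i x
          rw [Finset.sup_singleton]
          show (c2 i.castSucc).f x = (c i).f x
          rw [hc2, Fin.snoc_castSucc]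
        · intro x
          rw [Finset.inf_singleton]
          show (c2 (Fin.last d)).f x = W.sup x
          rw [hc2, Fin.snoc_last]
          rfl
      have hc2le : c2 ≤ b' := by
        intro j
        rcases Fin.eq_castSucc_or_eq_last j with ⟨i, rfl⟩ | rfl
        · rw [hc2, Fin.snoc_castSucc, hcast]; exact hcle i
        · rw [hc2, Fin.snoc_last, hlast]
          intro x
          show W.sup x ≤ e.f x
          rw [hef]
          exact Finset.sup_mono hWV
      have hceq := hb'minr c2 (S8.good_iff_stage.2 ⟨W, hc2stage⟩) hc2le
      funext i
      have h2 : c2 i.castSucc = b' i.castSucc := by rw [hceq]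
      rw [hc2, Fin.snoc_castSucc, hcast] at h2
      exact h2
    obtain ⟨U', hU'⟩ := S8.good_iff_stage.1 hb'good
    obtain ⟨B, hBne, hBsub, hsnd, heq1, heq2⟩ := hU'
    set x0 : Fin r → Bool := fun n => if n ∈ V then false else true with hx0
    have hVx0 : V.sup x0 = false := (S8.bsup_false_iff _ _).2 (fun n hn => by
      simp only [hx0]; rw [if_pos hn])
    have hlastf : (b' (Fin.last d)).f x0 = false := by
      rw [hlast, hef]; exact hVx0
    rw [heq2] at hlastf
    obtain ⟨q0, hq0, hq0f⟩ := (S8.binf_false_iff _ _).1 hlastf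
    have hq0sub : q0.2 ⊆ V := by
      intro n hn
      have h1 := (S8.bsup_false_iff _ _).1 hq0f n hn
      simp only [hx0] at h1
      by_contra hnV
      rw [if_neg hnV] at h1
      exact Bool.noConfusion h1
    have hq0eq : q0.1 = b := by
      apply hkey q0.1 q0.2 (by rw [Prod.mk.eta]; exact hBsub hq0)
      · intro i x
        rw [S8.bool_le_iff]
        intro hx
        have h2 : (b' i.castSucc).f x = true := by
          rw [heq1]
          exact (S8.bsup_true_iff _ _).2 ⟨q0, hq0, hx⟩
        rw [hcast] at h2
        exact h2
      · exact hq0sub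
    have hbgood : GoodL b := S8.good_iff_stage.2 ⟨q0.2, by rw [← hq0eq, Prod.mk.eta]; exact hBsub hq0⟩
    refine ⟨hbgood, ?_⟩
    intro c hcgood hcle
    obtain ⟨W, hW⟩ := S8.good_iff_stage.1 hcgood
    funext i
    apply FDL.ext'; funext x
    apply S8.beq_of_iff
    refine ⟨fun h => S8.bool_le_iff.1 (hcle i x) h, fun hbix => ?_⟩
    by_cases hcase : ∀ n ∈ V, x n = true
    · by_contra hcx
      have hcx' : (c i).f x = false := by
        revert hcx; cases (c i).f x <;> simp
      set j : Fin d := if (i : ℕ) = 0 then ⟨1, by omega⟩ else ⟨0, by omega⟩ with hj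
      have hij : i ≠ j := by
        by_cases h0 : (i : ℕ) = 0
        · have hj1 : j = ⟨1, by omega⟩ := by rw [hj, if_pos h0]
          rw [hj1]; exact Fin.ne_of_val_ne (show (i : ℕ) ≠ 1 by omega)
        · have hj1 : j = ⟨0, by omega⟩ := by rw [hj, if_neg h0]
          rw [hj1]; exact Fin.ne_of_val_ne (show (i : ℕ) ≠ 0 by omega)
      have h5 : ¬ ((c j).f (fun n => !(x n)) = false) := by
        intro hf
        have h6 := S8.stage_P d (c, W) hW i j hij x hf
        rw [h6] at hcx'
        exact Bool.noConfusion hcx'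
      have h6 : (c j).f (fun n => !(x n)) = true := by
        revert h5; cases (c j).f (fun n => !(x n)) <;> simp
      have h7 : (b j).f (fun n => !(x n)) = true := S8.bool_le_iff.1 (hcle j _) h6
      have h8 : (b j).f (fun n => !(x n)) = false := by
        apply S8.eval_false_of
        intro n hdep
        rw [hcase n ((hmemV n).2 ⟨j, hdep⟩)]
        rfl
      rw [h7] at h8
      exact Bool.noConfusion h8
    · push_neg at hcase
      obtain ⟨m1, hm1V, hm1x⟩ := hcase
      have hm1x' : x m1 = false := by revert hm1x; cases x m1 <;> simp
      set σ : Fin r → Fin r := fun n => if n ∈ V then n else m1 with hσ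
      have hsubc := S8.stage_subst σ d (c, W) hW
      have himage : W.image σ ⊆ V := by
        intro n hn
        obtain ⟨m, _, rfl⟩ := Finset.mem_image.1 hn
        simp only [hσ]
        by_cases hmV : m ∈ V
        · rw [if_pos hmV]; exact hmV
        · rw [if_neg hmV]; exact hm1V
      have hceq : (fun i' => S8.substF σ ((c, W).1 i')) = b := by
        apply hkey _ (W.image σ) hsubc
        · intro i' x'
          have hmono := S8.substF_mono σ (hcle i') x'
          have hfix : S8.substF σ (b i') = b i' :=
            S8.substF_fix σ (b i') (fun n hdep => by
              simp only [hσ]; rw [if_pos ((hmemV n).2 ⟨i', hdep⟩)])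
          rw [hfix] at hmono
          exact hmono
        · exact himage
      have h9 : (b i).f x = (c i).f (fun n => x (σ n)) := by
        conv_lhs => rw [← hceq]
        rfl
      have h10 : ∀ n, x (σ n) ≤ x n := by
        intro n
        simp only [hσ]
        by_cases hnV : n ∈ V
        · rw [if_pos hnV]
        · rw [if_neg hnV, hm1x']
          exact Bool.false_le _
      have h11 := (c i).mono h10
      exact S8.bool_le_iff.1 h11 (by rw [← h9]; exact hbix)
end
end
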